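/- arXiv:1908.05207 — 7 statements merged into one kernel-verified Lean document; each statement's English description precedes it below -/
import Mathlib

section
/- Let π: (X,T)→(Y,S) be a factor map between topological dynamical systems with (X,T) minimal and Y compact metric. Then for each δ>0 there is η>0 such that for every x∈X, the image π(B_δ(x)) contains some open ball of radius η in Y. -/
open Filter Metric Set MeasureTheory

noncomputable section

/-- Upper density of a set of nonnegative integers. -/
def upperDensity (F : Set ℕ) : ℝ :=
  Filter.atTop.limsup fun n : ℕ => ((F ∩ Set.Ico 0 n).ncard : ℝ) / n

/-- Upper Banach density of a set of nonnegative integers. -/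
def banachDensity (F : Set ℕ) : ℝ :=
  Filter.atTop.limsup fun n : ℕ => ⨆ M : ℕ, ((F ∩ Set.Ico M (M + n)).ncard : ℝ) / n

variable {X Y : Type} [MetricSpace X] [MetricSpace Y]

/-- A t.d.s. is minimal if every forward orbit is dense. -/
def IsMinimalTDS (T : X → X) : Prop := ∀ x : X, Dense (Set.range fun n : ℕ => T^[n] x)

/-- A factor map between topological dynamical systems. -/
def IsFactorMap (T : X → X) (S : Y → Y) (π : X → Y) : Prop :=
  Continuous π ∧ Function.Surjective π ∧ π ∘ T = S ∘ π

/-- Uniform equicontinuity of the family of iterates. -/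
def IsEquicontinuousSys (T : X → X) : Prop :=
  ∀ ε > 0, ∃ δ > 0, ∀ x y : X, dist x y < δ → ∀ n : ℕ, dist (T^[n] x) (T^[n] y) < ε

/-- Birkhoff average of the distance of two orbits. -/
def birkhoffDist (T : X → X) (x y : X) (n : ℕ) : ℝ :=
  (∑ i ∈ Finset.Icc 1 n, dist (T^[i] x) (T^[i] y)) / n

/-- The Besicovitch pseudometric. -/
def besicovitch (T : X → X) (x y : X) : ℝ := Filter.atTop.limsup (birkhoffDist T x y)

/-- Mean equicontinuity. -/
def MeanEquicontinuous (T : X → X) : Prop :=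
  ∀ ε > 0, ∃ δ > 0, ∀ x y : X, dist x y ≤ δ → besicovitch T x y ≤ ε

/-- Cesàro average of the diameters of the iterates of a set. -/
def diamAvg (T : X → X) (U : Set X) (n : ℕ) : ℝ :=
  (∑ i ∈ Finset.Icc 1 n, Metric.diam (T^[i] '' U)) / n

/-- Diam-mean equicontinuity point. -/
def DiamMeanEqPt (T : X → X) (x : X) : Prop :=
  ∀ ε > 0, ∃ δ > 0, Filter.atTop.limsup (diamAvg T (Metric.ball x δ)) < ε

/-- Diam-mean equicontinuity. -/
def DiamMeanEquicontinuous (T : X → X) : Prop := ∀ x : X, DiamMeanEqPt T x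

/-- Best average of diameters over windows of length `n`. -/
def banachDiamAvg (T : X → X) (U : Set X) (n : ℕ) : ℝ :=
  ⨆ M : ℕ, (∑ i ∈ Finset.Icc (M + 1) (M + n), Metric.diam (T^[i] '' U)) / n

/-- Banach diam-mean equicontinuity point. -/
def BanachDiamMeanEqPt (T : X → X) (x : X) : Prop :=
  ∀ ε > 0, ∃ δ > 0, Filter.atTop.limsup (banachDiamAvg T (Metric.ball x δ)) < ε

/-- Banach diam-mean equicontinuity. -/
def BanachDiamMeanEquicontinuous (T : X → X) : Prop := ∀ x : X, BanachDiamMeanEqPt T x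

/-- `π` is the maximal equicontinuous factor map of `(X,T)`, with factor system `(Y,S)`. -/
def IsMEF (T : X → X) (S : Y → Y) (π : X → Y) : Prop :=
  IsFactorMap T S π ∧ IsEquicontinuousSys S ∧
    ∀ (Z : Type) [MetricSpace Z] [CompactSpace Z] (R : Z → Z) (φ : X → Z),
      IsFactorMap T R φ → IsEquicontinuousSys R →
        ∃ ψ : Y → Z, Continuous ψ ∧ ψ ∘ π = φ ∧ ψ ∘ S = R ∘ ψ

section AuxSemiOpen

variable {Y : Type} [MetricSpace Y] [CompactSpace Y]

/-- In a minimal compact system, the image of the complement of a nonempty open set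
is not everything. -/
lemma lemA {S : Y → Y} (hS : Continuous S)
    (hmin : ∀ y : Y, Dense (Set.range fun n : ℕ => S^[n] y))
    {V : Set Y} (hV : IsOpen V) (hne : V.Nonempty) : S '' Vᶜ ≠ Set.univ := by
  intro heq
  set B : ℕ → Set Y := fun n => ⋂ i ∈ Finset.range (n + 1), S^[i] ⁻¹' Vᶜ with hB
  have hBcl : ∀ n, IsClosed (B n) := fun n =>
    isClosed_biInter fun i _ => (hV.isClosed_compl).preimage (hS.iterate i)
  have hBsub : ∀ n, B (n + 1) ⊆ B n := by
    intro n z hz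
    simp only [hB, Set.mem_iInter] at hz ⊢
    intro i hi
    exact hz i (Finset.mem_range.2 (Nat.lt_succ_of_lt (Finset.mem_range.1 hi)))
  have hBne : ∀ n, (B n).Nonempty := by
    intro n
    induction n with
    | zero =>
      have hVc : Vᶜ.Nonempty := by
        by_contra h
        rw [Set.not_nonempty_iff_eq_empty] at h
        rw [h, Set.image_empty] at heq
        exact (hne.mono (Set.subset_univ V)).ne_empty (by rw [← heq])
      obtain ⟨z, hz⟩ := hVc
      exact ⟨z, by simp [hB, hz]⟩
    | succ n ih =>
      obtain ⟨y, hy⟩ := ih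
      have : y ∈ S '' Vᶜ := by rw [heq]; trivial
      obtain ⟨x, hx, hxy⟩ := this
      refine ⟨x, ?_⟩
      simp only [hB, Set.mem_iInter, Finset.mem_range] at hy ⊢
      intro i hi
      cases i with
      | zero => simpa using hx
      | succ i =>
        have : S^[i + 1] x = S^[i] y := by
          rw [Function.iterate_succ_apply, hxy]
        rw [Set.mem_preimage, this]
        exact hy i (by omega)
  have hint : (⋂ n, B n).Nonempty :=
    IsCompact.nonempty_iInter_of_sequence_nonempty_isCompact_isClosed B hBsub hBne
      ((hBcl 0).isCompact) hBcl
  obtain ⟨y, hy⟩ := hint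
  have horb : ∀ n : ℕ, S^[n] y ∈ Vᶜ := by
    intro n
    have := Set.mem_iInter.1 hy n
    simp only [hB, Set.mem_iInter, Finset.mem_range] at this
    exact this n (Nat.lt_succ_self n)
  obtain ⟨z, ⟨n, rfl⟩, hzV⟩ := (hmin y).exists_mem_open hV hne
  exact horb n hzV

/-- A minimal map on a compact metric space is semi-open. -/
lemma semiopen {S : Y → Y} (hS : Continuous S) (hsurj : Function.Surjective S)
    (hmin : ∀ y : Y, Dense (Set.range fun n : ℕ => S^[n] y))
    {V : Set Y} (hV : IsOpen V) (hne : V.Nonempty) : (interior (S '' V)).Nonempty := by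
  have h1 : S '' Vᶜ ≠ Set.univ := lemA hS hmin hV hne
  have hcl : IsClosed (S '' Vᶜ) := (hV.isClosed_compl.isCompact.image hS).isClosed
  have hopen : IsOpen (S '' Vᶜ)ᶜ := hcl.isOpen_compl
  have hne' : ((S '' Vᶜ)ᶜ).Nonempty := by
    rw [Set.nonempty_compl]; exact h1
  have hsub : (S '' Vᶜ)ᶜ ⊆ S '' V := by
    intro y hy
    obtain ⟨x, rfl⟩ := hsurj y
    by_cases hx : x ∈ V
    · exact ⟨x, hx, rfl⟩
    · exact absurd (Set.mem_image_of_mem S hx) hy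
  exact hne'.mono (interior_maximal hsub hopen)

/-- Preimages of closed sets with empty interior under a minimal map have empty interior. -/
lemma preimage_empty_interior {S : Y → Y} (hS : Continuous S) (hsurj : Function.Surjective S)
    (hmin : ∀ y : Y, Dense (Set.range fun n : ℕ => S^[n] y))
    {K : Set Y} (hKint : interior K = ∅) : interior (S ⁻¹' K) = ∅ := by
  by_contra h
  have hne : (interior (S ⁻¹' K)).Nonempty := Set.nonempty_iff_ne_empty.2 h
  have hsub : S '' interior (S ⁻¹' K) ⊆ K :=
    (Set.image_mono (f := S) interior_subset).trans (Set.image_preimage_subset S K)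
  have := semiopen hS hsurj hmin isOpen_interior hne
  have : (interior K).Nonempty := this.mono (interior_mono hsub)
  rw [hKint] at this
  exact this.ne_empty rfl

end AuxSemiOpen

section CoreClaim

variable {Y : Type} [MetricSpace Y] [CompactSpace Y]

lemma core_ball_claim {X : Type} [MetricSpace X] [CompactSpace X] [Nonempty X]
    (T : X → X) (S : Y → Y) (hT : Continuous T) (hS : Continuous S)
    (π : X → Y) (hπ : IsFactorMap T S π) (hmin : IsMinimalTDS T)
    (x : X) (r : ℝ) (hr : 0 < r) :
    ∃ y : Y, ∃ η : ℝ, 0 < η ∧ Metric.ball y η ⊆ π '' Metric.ball x r := by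
  obtain ⟨hπc, hπs, hcomm⟩ := hπ
  have hsemi0 : Function.Semiconj π T S := fun a => congrFun hcomm a
  have hsemi : ∀ (n : ℕ) (a : X), π (T^[n] a) = S^[n] (π a) :=
    fun n a => (hsemi0.iterate_right n) a
  -- T is surjective
  have hTsurj : Function.Surjective T := by
    obtain ⟨x₀⟩ := ‹Nonempty X›
    have hcl : IsClosed (Set.range T) := by
      rw [← Set.image_univ]; exact (isCompact_univ.image hT).isClosed
    have hsub : (Set.range fun n : ℕ => T^[n] (T x₀)) ⊆ Set.range T := by
      rintro _ ⟨n, rfl⟩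
      exact ⟨T^[n] x₀, ((Function.iterate_succ_apply' T n x₀).symm.trans (Function.iterate_succ_apply T n x₀))⟩
    intro z
    exact (hcl.closure_subset_iff.2 hsub) ((hmin (T x₀)) z)
  -- S is surjective
  have hSsurj : Function.Surjective S := by
    intro y
    obtain ⟨a, rfl⟩ := hπs y
    obtain ⟨a', rfl⟩ := hTsurj a
    exact ⟨π a', (congrFun hcomm a').symm⟩
  -- (Y, S) is minimal
  have hminY : ∀ y : Y, Dense (Set.range fun n : ℕ => S^[n] y) := by
    intro y
    obtain ⟨a, rfl⟩ := hπs y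
    have hre : (fun n : ℕ => S^[n] (π a)) = π ∘ (fun n : ℕ => T^[n] a) :=
      funext fun n => (hsemi n a).symm
    rw [hre, Set.range_comp]
    intro z
    obtain ⟨w, rfl⟩ := hπs z
    exact image_closure_subset_closure_image hπc ⟨w, (hmin a) w, rfl⟩
  -- the covering argument
  set U := Metric.ball x (r / 2) with hU
  have hUopen : IsOpen U := Metric.isOpen_ball
  have hUne : U.Nonempty := ⟨x, Metric.mem_ball_self (by linarith)⟩
  have hcover : (Set.univ : Set X) ⊆ ⋃ n : ℕ, T^[n] ⁻¹' U := by
    intro z _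
    obtain ⟨w, ⟨n, rfl⟩, hw⟩ := (hmin z).exists_mem_open hUopen hUne
    exact Set.mem_iUnion.2 ⟨n, hw⟩
  obtain ⟨t, ht⟩ := isCompact_univ.elim_finite_subcover (fun n : ℕ => T^[n] ⁻¹' U)
    (fun n => hUopen.preimage (hT.iterate n)) hcover
  set K := closure (π '' U) with hK
  have hKcl : IsClosed K := isClosed_closure
  have hYcover : (⋃ n : ℕ, S^[n] ⁻¹' K) = Set.univ := by
    apply Set.eq_univ_of_forall
    intro y
    obtain ⟨z, rfl⟩ := hπs y
    obtain ⟨n, -, hz⟩ := Set.mem_iUnion₂.1 (ht (Set.mem_univ z))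
    exact Set.mem_iUnion.2 ⟨n, by
      show S^[n] (π z) ∈ K
      rw [← hsemi]
      exact subset_closure ⟨T^[n] z, hz, rfl⟩⟩
  have : Nonempty Y := ⟨π x⟩
  obtain ⟨n, hn⟩ := nonempty_interior_of_iUnion_of_closed
    (fun n : ℕ => hKcl.preimage (hS.iterate n)) hYcover
  have hKint : (interior K).Nonempty := by
    by_contra h
    have hKe : interior K = ∅ := Set.not_nonempty_iff_eq_empty.1 h
    have hind : ∀ m : ℕ, interior (S^[m] ⁻¹' K) = ∅ := by
      intro m
      induction m with
      | zero => simpa using hKe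
      | succ m ih =>
        have he : S^[m + 1] ⁻¹' K = S ⁻¹' (S^[m] ⁻¹' K) := by
          rw [Function.iterate_succ, Set.preimage_comp]
        rw [he]
        exact preimage_empty_interior hS hSsurj hminY ih
    rw [hind n] at hn
    exact hn.ne_empty rfl
  obtain ⟨y, hy⟩ := hKint
  obtain ⟨η, hη, hball⟩ := Metric.isOpen_iff.1 isOpen_interior y hy
  refine ⟨y, η, hη, ?_⟩
  have hKsub : K ⊆ π '' closure U :=
    closure_minimal (Set.image_mono (f := π) subset_closure)
      (isClosed_closure.isCompact.image hπc).isClosed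
  have hcb : closure U ⊆ Metric.ball x r :=
    closure_ball_subset_closedBall.trans (Metric.closedBall_subset_ball (by linarith))
  exact hball.trans (interior_subset.trans (hKsub.trans (Set.image_mono (f := π) hcb)))

end CoreClaim

/-- for a factor map from a minimal system, images of `δ`-balls
uniformly contain `η`-balls. -/
theorem image_ball_contains_ball
    {X Y : Type} [MetricSpace X] [CompactSpace X] [MetricSpace Y] [CompactSpace Y]
    (T : X → X) (S : Y → Y) (hT : Continuous T) (hS : Continuous S)
    (π : X → Y) (hπ : IsFactorMap T S π) (hmin : IsMinimalTDS T) :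
    ∀ δ > 0, ∃ η > 0, ∀ x : X, ∃ y : Y, Metric.ball y η ⊆ π '' Metric.ball x δ := by
  intro δ hδ
  rcases isEmpty_or_nonempty X with h | h
  · exact ⟨1, one_pos, fun x => (h.false x).elim⟩
  · choose yy ee hee hsub using fun x : X =>
      core_ball_claim T S hT hS π hπ hmin x (δ / 2) (by linarith)
    obtain ⟨t, ht⟩ := isCompact_univ.elim_finite_subcover
      (fun x : X => Metric.ball x (δ / 2)) (fun x => Metric.isOpen_ball)
      (fun z _ => Set.mem_iUnion.2 ⟨z, Metric.mem_ball_self (by linarith)⟩)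
    have htne : t.Nonempty := by
      obtain ⟨x₀⟩ := h
      obtain ⟨i, hi, -⟩ := Set.mem_iUnion₂.1 (ht (Set.mem_univ x₀))
      exact ⟨i, hi⟩
    refine ⟨t.inf' htne ee, (Finset.lt_inf'_iff htne).2 fun i _ => hee i, fun x => ?_⟩
    obtain ⟨i, hi, hxi⟩ := Set.mem_iUnion₂.1 (ht (Set.mem_univ x))
    refine ⟨yy i, fun z hz => ?_⟩
    have h1 : z ∈ Metric.ball (yy i) (ee i) :=
      Metric.ball_subset_ball (Finset.inf'_le ee hi) hz
    obtain ⟨w, hw, rfl⟩ := hsub i h1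
    refine ⟨w, ?_, rfl⟩
    rw [Metric.mem_ball] at hw hxi ⊢
    have h2 : dist i x < δ / 2 := by rw [dist_comm]; exact hxi
    have h3 : dist w x ≤ dist w i + dist i x := dist_triangle w i x
    linarith
end
end

section
/- Let π: (X,T)→(Y,S) be a factor map between minimal topological dynamical systems on compact metric spaces. Then either there exists y∈Y with π⁻¹(y) a singleton, or there exists ε>0 such that diam(π⁻¹(y)) > ε for every y∈Y. -/
open Filter Metric Set MeasureTheory

noncomputable section

variable {X Y : Type} [MetricSpace X] [MetricSpace Y]

section AuxMinimal

variable {Z : Type} [MetricSpace Z] [CompactSpace Z]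

lemma allBounded (s : Set Z) : Bornology.IsBounded s :=
  (isCompact_univ.isBounded).subset (Set.subset_univ s)

lemma minimal_surj {f : Z → Z} (hf : Continuous f) (hm : IsMinimalTDS f) :
    Function.Surjective f := by
  have hcl : IsClosed (Set.range f) := (isCompact_range hf).isClosed
  have hdense : Dense (Set.range f) := by
    rcases isEmpty_or_nonempty Z with h | h
    · intro z; exact isEmptyElim z
    · obtain ⟨z⟩ := h
      have hd := hm (f z)
      have hsub : (Set.range fun n : ℕ => f^[n] (f z)) ⊆ Set.range f := by
        rintro _ ⟨n, rfl⟩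
        exact ⟨f^[n] z, (Function.iterate_succ_apply' f n z).symm.trans
          (Function.iterate_succ_apply f n z)⟩
      exact hd.mono hsub
  rw [← Set.range_eq_univ]
  exact hcl.closure_eq ▸ hdense.closure_eq

lemma minimal_hitting {f : Z → Z} (hf : Continuous f) (hm : IsMinimalTDS f)
    {U : Set Z} (hU : IsOpen U) (hne : U.Nonempty) :
    ∃ N : ℕ, ∀ z : Z, ∃ n ≤ N, f^[n] z ∈ U := by
  have hcov : (Set.univ : Set Z) ⊆ ⋃ n : ℕ, f^[n] ⁻¹' U := by
    intro z _
    obtain ⟨w, hwU, ⟨n, rfl⟩⟩ := (hm z).inter_open_nonempty U hU hne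
    exact Set.mem_iUnion.2 ⟨n, hwU⟩
  obtain ⟨t, ht⟩ := isCompact_univ.elim_finite_subcover (fun n : ℕ => f^[n] ⁻¹' U)
      (fun n => hU.preimage (hf.iterate n)) hcov
  refine ⟨t.sup id, fun z => ?_⟩
  obtain ⟨n, hn, hz⟩ := Set.mem_iUnion₂.1 (ht (Set.mem_univ z))
  exact ⟨n, Finset.le_sup (f := id) hn, hz⟩

lemma unif_iterates {f : Z → Z} (hf : Continuous f) (N : ℕ) {ε : ℝ} (hε : 0 < ε) :
    ∃ δ > 0, ∀ a b : Z, dist a b ≤ δ → ∀ n ≤ N, dist (f^[n] a) (f^[n] b) ≤ ε := by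
  induction N with
  | zero =>
      refine ⟨ε, hε, fun a b h n hn => ?_⟩
      interval_cases n
      simpa using h
  | succ N ih =>
      obtain ⟨δ₁, hδ₁, h1⟩ := ih
      have hu : UniformContinuous f^[N + 1] :=
        CompactSpace.uniformContinuous_of_continuous (hf.iterate (N + 1))
      obtain ⟨δ₂, hδ₂, h2⟩ := Metric.uniformContinuous_iff.1 hu ε hε
      refine ⟨min δ₁ (δ₂ / 2), lt_min hδ₁ (by positivity), fun a b h n hn => ?_⟩
      rcases Nat.lt_or_ge n (N + 1) with h' | h'
      · exact h1 a b (h.trans (min_le_left _ _)) n (Nat.lt_succ_iff.1 h')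
      · have hn' : n = N + 1 := le_antisymm hn h'
        subst hn'
        exact (h2 (lt_of_le_of_lt (h.trans (min_le_right _ _)) (by linarith))).le

lemma minimal_irreducible {f : Z → Z} (hf : Continuous f) (hm : IsMinimalTDS f)
    {C : Set Z} (hC : IsClosed C) (hfC : f '' C = Set.univ) : C = Set.univ := by
  rcases isEmpty_or_nonempty Z with h | h
  · exact Set.eq_univ_of_forall fun z => isEmptyElim z
  by_contra hne
  have hUo : IsOpen Cᶜ := hC.isOpen_compl
  have hUne : Cᶜ.Nonempty := Set.nonempty_compl.2 hne
  obtain ⟨N, hN⟩ := minimal_hitting hf hm hUo hUne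
  have hex : ∀ y : Z, ∃ x, x ∈ C ∧ f x = y := by
    intro y
    have : y ∈ f '' C := hfC ▸ Set.mem_univ y
    obtain ⟨x, hx, hxy⟩ := this
    exact ⟨x, hx, hxy⟩
  choose pre hpreC hpref using hex
  have hinv : ∀ (k : ℕ) (z : Z), f^[k] (pre^[k] z) = z := by
    intro k
    induction k with
    | zero => simp
    | succ k ih =>
        intro z
        rw [Function.iterate_succ_apply' pre, Function.iterate_succ_apply f,
          hpref, ih]
  obtain ⟨z₀⟩ := h
  obtain ⟨n, hn, hmem⟩ := hN (pre^[N + 1] z₀)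
  have hsplit : pre^[N + 1] z₀ = pre^[n] (pre^[N + 1 - n] z₀) :=
    by rw [← Function.iterate_add_apply, Nat.add_sub_cancel' (by omega)]
  rw [hsplit, hinv] at hmem
  have : pre^[N + 1 - n] z₀ ∈ C := by
    have h1 : N + 1 - n = (N - n) + 1 := by omega
    rw [h1, Function.iterate_succ_apply']
    exact hpreC _
  exact hmem this

lemma image_closed_nwd {f : Z → Z} (hf : Continuous f) (hm : IsMinimalTDS f)
    {C : Set Z} (hC : IsClosed C) (hCi : interior C = ∅) :
    IsClosed (f '' C) ∧ interior (f '' C) = ∅ := by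
  have hcl : IsClosed (f '' C) := (hC.isCompact.image hf).isClosed
  refine ⟨hcl, ?_⟩
  by_contra hne
  set Wo := interior (f '' C) with hWodef
  have hWone : Wo.Nonempty := Set.nonempty_iff_ne_empty.2 hne
  have hAim : f '' (C ∪ (f ⁻¹' Wo)ᶜ) = Set.univ := by
    apply Set.eq_univ_of_forall
    intro y
    by_cases hyW : y ∈ Wo
    · obtain ⟨x, hx, rfl⟩ := interior_subset hyW
      exact ⟨x, Or.inl hx, rfl⟩
    · obtain ⟨x, rfl⟩ := minimal_surj hf hm y
      exact ⟨x, Or.inr (fun hxW => hyW hxW), rfl⟩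
  have hA : C ∪ (f ⁻¹' Wo)ᶜ = Set.univ :=
    minimal_irreducible hf hm
      (hC.union ((isOpen_interior.preimage hf).isClosed_compl)) hAim
  have hsub : f ⁻¹' Wo ⊆ C := by
    intro x hx
    rcases (hA ▸ Set.mem_univ x : x ∈ C ∪ (f ⁻¹' Wo)ᶜ) with h | h
    · exact h
    · exact absurd hx h
  obtain ⟨y, hy⟩ := hWone
  obtain ⟨x, rfl⟩ := minimal_surj hf hm y
  have : x ∈ interior C :=
    interior_maximal hsub (isOpen_interior.preimage hf) hy
  rw [hCi] at this
  exact this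

lemma preimage_dense_open {f : Z → Z} (hf : Continuous f) (hm : IsMinimalTDS f)
    {G : Set Z} (hGo : IsOpen G) (hGd : Dense G) :
    Dense (f ⁻¹' G) := by
  rw [dense_iff_inter_open]
  intro O hO hOne
  have hclosed : IsClosed (f '' Oᶜ) := (hO.isClosed_compl.isCompact.image hf).isClosed
  have hne : f '' Oᶜ ≠ Set.univ := by
    intro h
    have h2 := minimal_irreducible hf hm hO.isClosed_compl h
    obtain ⟨x, hx⟩ := hOne
    have : x ∈ Oᶜ := h2 ▸ Set.mem_univ x
    exact this hx
  obtain ⟨g, hgW, hgG⟩ := hGd.inter_open_nonempty _ hclosed.isOpen_compl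
    (Set.nonempty_compl.2 hne)
  obtain ⟨x, rfl⟩ := minimal_surj hf hm g
  have hxO : x ∈ O := by
    by_contra h
    exact hgW ⟨x, h, rfl⟩
  exact ⟨x, hxO, hgG⟩

lemma preimage_iter_dense {f : Z → Z} (hf : Continuous f) (hm : IsMinimalTDS f)
    {G : Set Z} (hGo : IsOpen G) (hGd : Dense G) (m : ℕ) :
    Dense (f^[m] ⁻¹' G) ∧ IsOpen (f^[m] ⁻¹' G) := by
  induction m with
  | zero => simpa using ⟨hGd, hGo⟩
  | succ m ih =>
      have heq : f^[m + 1] ⁻¹' G = f ⁻¹' (f^[m] ⁻¹' G) := by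
        rw [Function.iterate_succ, Set.preimage_comp]
      rw [heq]
      exact ⟨preimage_dense_open hf hm ih.2 ih.1, ih.2.preimage hf⟩

end AuxMinimal


section AuxTube

variable {Z W : Type} [MetricSpace Z] [CompactSpace Z] [MetricSpace W] [CompactSpace W]

lemma allBounded' (s : Set Z) : Bornology.IsBounded s :=
  (isCompact_univ.isBounded).subset (Set.subset_univ s)

lemma tube_lemma' {π : Z → W} (hπ : Continuous π) {y₀ : W} {ε : ℝ}
    (h : Metric.diam (π ⁻¹' {y₀}) < ε) :
    ∃ U : Set W, IsOpen U ∧ y₀ ∈ U ∧ Metric.diam (π ⁻¹' U) < ε := by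
  set K := π ⁻¹' {y₀} with hK
  set ρ := (ε - Metric.diam K) / 3 with hρdef
  have hρ : 0 < ρ := by
    have := sub_pos.2 h
    rw [hρdef]; linarith
  set G := ⋃ x ∈ K, Metric.ball x ρ with hG
  have hGopen : IsOpen G := isOpen_biUnion fun x _ => isOpen_ball
  have hKG : K ⊆ G := fun x hx => Set.mem_biUnion hx (Metric.mem_ball_self hρ)
  have hGdiam : Metric.diam G ≤ Metric.diam K + 2 * ρ := by
    apply Metric.diam_le_of_forall_dist_le (by positivity)
    rintro a ha b hb
    obtain ⟨x, hx, hax⟩ := Set.mem_iUnion₂.1 ha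
    obtain ⟨x', hx', hbx'⟩ := Set.mem_iUnion₂.1 hb
    have h1 : dist a x < ρ := Metric.mem_ball.1 hax
    have h2 : dist b x' < ρ := Metric.mem_ball.1 hbx'
    have h3 : dist x x' ≤ Metric.diam K :=
      Metric.dist_le_diam_of_mem (allBounded' K) hx hx'
    calc dist a b ≤ dist a x + dist x x' + dist x' b := dist_triangle4 a x x' b
      _ ≤ ρ + Metric.diam K + ρ := by
          have := dist_comm x' b
          nlinarith [dist_nonneg (x := a) (y := x)]
      _ = Metric.diam K + 2 * ρ := by ring
  refine ⟨(π '' Gᶜ)ᶜ, ?_, ?_, ?_⟩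
  · exact ((hGopen.isClosed_compl.isCompact.image hπ).isClosed).isOpen_compl
  · intro hmem
    obtain ⟨x, hxG, hxy⟩ := hmem
    exact hxG (hKG (by simp [hK, hxy]))
  · have hsub : π ⁻¹' (π '' Gᶜ)ᶜ ⊆ G := by
      intro x hx
      by_contra hxG
      exact hx ⟨x, hxG, rfl⟩
    have := Metric.diam_mono hsub (allBounded' G)
    have hd0 := Metric.diam_nonneg (s := K)
    calc Metric.diam (π ⁻¹' (π '' Gᶜ)ᶜ) ≤ Metric.diam G := this
      _ ≤ Metric.diam K + 2 * ρ := hGdiam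
      _ < ε := by rw [hρdef]; linarith

lemma V_open {π : Z → W} (hπ : Continuous π) (ε : ℝ) :
    IsOpen {y : W | Metric.diam (π ⁻¹' {y}) < ε} := by
  rw [isOpen_iff_forall_mem_open]
  intro y₀ hy₀
  obtain ⟨U, hUo, hyU, hUd⟩ := tube_lemma' hπ hy₀
  refine ⟨U, fun y hy => ?_, hUo, hyU⟩
  have hsub : π ⁻¹' {y} ⊆ π ⁻¹' U :=
    Set.preimage_mono (Set.singleton_subset_iff.2 hy)
  exact lt_of_le_of_lt (Metric.diam_mono hsub (allBounded' _)) hUd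

end AuxTube


section AuxE

variable {Z : Type} [MetricSpace Z] [CompactSpace Z]

/-- points with two r-separated preimages -/
def sepSet (f : Z → Z) (r : ℝ) : Set Z :=
  {y | ∃ u v, f u = y ∧ f v = y ∧ r ≤ dist u v}

lemma sepSet_closed {f : Z → Z} (hf : Continuous f) (r : ℝ) :
    IsClosed (sepSet f r) := by
  have heq : sepSet f r =
      (fun p : Z × Z => f p.1) '' {p : Z × Z | f p.1 = f p.2 ∧ r ≤ dist p.1 p.2} := by
    ext y
    constructor
    · rintro ⟨u, v, hu, hv, hd⟩
      exact ⟨(u, v), ⟨hu.trans hv.symm, hd⟩, hu⟩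
    · rintro ⟨⟨u, v⟩, ⟨he, hd⟩, rfl⟩
      exact ⟨u, v, rfl, he.symm, hd⟩
  rw [heq]
  have hcl : IsClosed {p : Z × Z | f p.1 = f p.2 ∧ r ≤ dist p.1 p.2} :=
    (isClosed_eq (hf.comp continuous_fst) (hf.comp continuous_snd)).inter
      (isClosed_le continuous_const continuous_dist)
  exact (hcl.isCompact.image (hf.comp continuous_fst)).isClosed

lemma baire_aux {t : Finset (Z × Z)} {F : Z × Z → Set Z} (hF : ∀ q, IsClosed (F q))
    {W : Set Z} (hWo : IsOpen W) (hWne : W.Nonempty) (hcov : W ⊆ ⋃ q ∈ t, F q) :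
    ∃ q ∈ t, (W ∩ interior (F q)).Nonempty := by
  classical
  set g : Option {q // q ∈ t} → Set Z := fun o =>
    match o with
    | none => Wᶜ
    | some q => F q.1 with hg
  have hgc : ∀ o, IsClosed (g o) := by
    rintro (_ | q)
    · exact hWo.isClosed_compl
    · exact hF _
  have hgu : ⋃ o, g o = Set.univ := by
    apply Set.eq_univ_of_forall
    intro z
    by_cases hz : z ∈ W
    · obtain ⟨q, hq, hzq⟩ := Set.mem_iUnion₂.1 (hcov hz)
      exact Set.mem_iUnion.2 ⟨some ⟨q, hq⟩, hzq⟩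
    · exact Set.mem_iUnion.2 ⟨none, hz⟩
  have hd := dense_iUnion_interior_of_closed hgc hgu
  obtain ⟨x, hxW, hx⟩ := hd.inter_open_nonempty W hWo hWne
  obtain ⟨o, hxo⟩ := Set.mem_iUnion.1 hx
  match o, hxo with
  | none, hxo =>
      have : x ∈ Wᶜ := interior_subset hxo
      exact absurd hxW this
  | some q, hxo => exact ⟨q.1, q.2, ⟨x, hxW, hxo⟩⟩

end AuxE


section AuxE2

variable {Z : Type} [MetricSpace Z] [CompactSpace Z]

lemma sepSet_nwd {f : Z → Z} (hf : Continuous f) (hm : IsMinimalTDS f) {r : ℝ} (hr : 0 < r) :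
    interior (sepSet f r) = ∅ := by
  classical
  by_contra hne
  set W₀ := interior (sepSet f r) with hW₀def
  have hW₀o : IsOpen W₀ := isOpen_interior
  have hW₀ne : W₀.Nonempty := Set.nonempty_iff_ne_empty.2 hne
  set δ := r / 8 with hδdef
  have hδ : 0 < δ := by positivity
  obtain ⟨s, hs⟩ := isCompact_univ.elim_finite_subcover (fun p : Z => Metric.ball p δ)
      (fun p => isOpen_ball) (fun z _ => Set.mem_iUnion.2 ⟨z, Metric.mem_ball_self hδ⟩)
  set sep : Z × Z → Prop := fun q =>
    ∀ p ∈ Metric.closedBall q.1 δ, ∀ p' ∈ Metric.closedBall q.2 δ, r / 2 ≤ dist p p'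
    with hsepdef
  set F : Z × Z → Set Z := fun q =>
    if sep q then (f '' Metric.closedBall q.1 δ) ∩ (f '' Metric.closedBall q.2 δ) else ∅
    with hFdef
  have hFcl : ∀ q, IsClosed (F q) := by
    intro q
    by_cases h : sep q
    · simp only [hFdef, if_pos h]
      exact ((isCompact_closedBall _ _).image hf).isClosed.inter
        ((isCompact_closedBall _ _).image hf).isClosed
    · simp only [hFdef, if_neg h]
      exact isClosed_empty
  have hcov : W₀ ⊆ ⋃ q ∈ s ×ˢ s, F q := by
    intro y hy
    obtain ⟨u, v, hu, hv, hd⟩ := interior_subset hy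
    obtain ⟨a, ha, hua⟩ := Set.mem_iUnion₂.1 (hs (Set.mem_univ u))
    obtain ⟨b, hb, hvb⟩ := Set.mem_iUnion₂.1 (hs (Set.mem_univ v))
    have hua' : dist u a < δ := Metric.mem_ball.1 hua
    have hvb' : dist v b < δ := Metric.mem_ball.1 hvb
    have hsepab : sep (a, b) := by
      intro p hp p' hp'
      have hp1 : dist p a ≤ δ := Metric.mem_closedBall.1 hp
      have hp2 : dist p' b ≤ δ := Metric.mem_closedBall.1 hp'
      have t1 : dist u p ≤ dist u a + dist a p := dist_triangle _ _ _
      have t2 : dist v p' ≤ dist v b + dist b p' := dist_triangle _ _ _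
      have t3 : dist u v ≤ dist u p + dist p p' + dist p' v := dist_triangle4 _ _ _ _
      have e1 : dist a p = dist p a := dist_comm _ _
      have e2 : dist b p' = dist p' b := dist_comm _ _
      have e3 : dist p' v = dist v p' := dist_comm _ _
      linarith
    refine Set.mem_iUnion₂.2 ⟨(a, b), Finset.mk_mem_product ha hb, ?_⟩
    simp only [hFdef, if_pos hsepab]
    exact ⟨⟨u, Metric.ball_subset_closedBall hua, hu⟩,
      ⟨v, Metric.ball_subset_closedBall hvb, hv⟩⟩
  obtain ⟨q, hqs, hq⟩ := baire_aux hFcl hW₀o hW₀ne hcov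
  have hsepq : sep q := by
    by_contra h
    rw [hFdef] at hq
    simp only [if_neg h, interior_empty, Set.inter_empty] at hq
    exact Set.not_nonempty_empty hq
  have hW'sub : W₀ ∩ interior (F q) ⊆
      (f '' Metric.closedBall q.1 δ) ∩ (f '' Metric.closedBall q.2 δ) := by
    intro y hy
    have h2 := interior_subset hy.2
    simpa only [hFdef, if_pos hsepq] using h2
  set W' := W₀ ∩ interior (F q) with hW'def
  have hW'o : IsOpen W' := hW₀o.inter isOpen_interior
  set O := f ⁻¹' W' ∩ Metric.ball q.1 (2 * δ) with hOdef
  have hOo : IsOpen O := (hW'o.preimage hf).inter isOpen_ball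
  have hOne : O.Nonempty := by
    obtain ⟨y, hy⟩ := hq
    obtain ⟨u, hu, huy⟩ := (hW'sub hy).1
    refine ⟨u, ?_, ?_⟩
    · simp only [Set.mem_preimage, huy]
      exact hy
    · have := Metric.mem_closedBall.1 hu
      exact Metric.mem_ball.2 (by linarith)
  have himg : f '' Oᶜ = Set.univ := by
    apply Set.eq_univ_of_forall
    intro y
    by_cases hyW : y ∈ W'
    · obtain ⟨v, hv, hvy⟩ := (hW'sub hyW).2
      refine ⟨v, fun hvO => ?_, hvy⟩
      have h1 := hsepq q.1 (Metric.mem_closedBall_self hδ.le) v hv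
      have h2 : dist v q.1 < 2 * δ := Metric.mem_ball.1 hvO.2
      have e1 : dist q.1 v = dist v q.1 := dist_comm _ _
      have hδr : δ = r / 8 := hδdef
      linarith
    · obtain ⟨x, rfl⟩ := minimal_surj hf hm y
      exact ⟨x, fun hxO => hyW hxO.1, rfl⟩
  have hC := minimal_irreducible hf hm hOo.isClosed_compl himg
  obtain ⟨x, hx⟩ := hOne
  have hx' : x ∈ Oᶜ := hC ▸ Set.mem_univ x
  exact hx' hx

/-- points all of whose iterated preimages are unique -/
def GoodSet (f : Z → Z) : Set Z :=
  ⋂ p : ℕ × ℕ, (f^[p.1] '' sepSet f (1 / (p.2 + 1 : ℝ)))ᶜ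

lemma bad_closed_nwd {f : Z → Z} (hf : Continuous f) (hm : IsMinimalTDS f)
    {r : ℝ} (hr : 0 < r) (k : ℕ) :
    IsClosed (f^[k] '' sepSet f r) ∧ interior (f^[k] '' sepSet f r) = ∅ := by
  induction k with
  | zero => simpa using ⟨sepSet_closed hf r, sepSet_nwd hf hm hr⟩
  | succ k ih =>
      have heq : f^[k + 1] '' sepSet f r = f '' (f^[k] '' sepSet f r) := by
        rw [← Set.image_comp, ← Function.iterate_succ']
      rw [heq]
      exact image_closed_nwd hf hm ih.1 ih.2

lemma goodSet_dense {f : Z → Z} (hf : Continuous f) (hm : IsMinimalTDS f) :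
    Dense (GoodSet f) := by
  apply dense_iInter_of_isOpen
  · intro p
    exact (bad_closed_nwd hf hm (by positivity) p.1).1.isOpen_compl
  · intro p
    exact interior_eq_empty_iff_dense_compl.1 (bad_closed_nwd hf hm (by positivity) p.1).2

lemma goodSet_open_inter {f : Z → Z} (hf : Continuous f) (hm : IsMinimalTDS f) (m : ℕ) :
    Dense (f^[m] ⁻¹' GoodSet f) := by
  have : f^[m] ⁻¹' GoodSet f =
      ⋂ p : ℕ × ℕ, f^[m] ⁻¹' (f^[p.1] '' sepSet f (1 / (p.2 + 1 : ℝ)))ᶜ := by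
    rw [GoodSet, Set.preimage_iInter]
  rw [this]
  apply dense_iInter_of_isOpen
  · intro p
    exact ((bad_closed_nwd hf hm (by positivity) p.1).1.isOpen_compl).preimage (hf.iterate m)
  · intro p
    exact (preimage_iter_dense hf hm
      (bad_closed_nwd hf hm (by positivity) p.1).1.isOpen_compl
      (interior_eq_empty_iff_dense_compl.1 (bad_closed_nwd hf hm (by positivity) p.1).2) m).1

lemma goodSet_mem_pre {f : Z → Z} {y z : Z} (hy : y ∈ GoodSet f) (hz : f z = y) :
    z ∈ GoodSet f := by
  simp only [GoodSet, Set.mem_iInter, Set.mem_compl_iff] at hy ⊢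
  rintro ⟨k, m⟩ hzB
  refine hy (k + 1, m) ?_
  have heq : f^[k + 1] '' sepSet f (1 / (m + 1 : ℝ)) =
      f '' (f^[k] '' sepSet f (1 / (m + 1 : ℝ))) := by
    rw [← Set.image_comp, ← Function.iterate_succ']
  rw [heq]
  exact ⟨z, hzB, hz⟩

lemma goodSet_subsingleton {f : Z → Z} :
    ∀ (j : ℕ) (y : Z), y ∈ GoodSet f → Set.Subsingleton (f^[j] ⁻¹' {y}) := by
  intro j
  induction j with
  | zero =>
      intro y _
      simpa using Set.subsingleton_singleton
  | succ j ih =>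
      intro y hy u hu v hv
      simp only [Set.mem_preimage, Set.mem_singleton_iff] at hu hv
      have h1 : f (f^[j] u) = y := (Function.iterate_succ_apply' f j u).symm.trans hu
      have h2 : f (f^[j] v) = y := (Function.iterate_succ_apply' f j v).symm.trans hv
      have hsub1 : Set.Subsingleton (f ⁻¹' {y}) := by
        intro a ha b hb
        simp only [Set.mem_preimage, Set.mem_singleton_iff] at ha hb
        by_contra hne
        obtain ⟨m, hm⟩ := exists_nat_one_div_lt (dist_pos.2 hne)
        have hyE : y ∈ sepSet f (1 / (m + 1 : ℝ)) := ⟨a, b, ha, hb, hm.le⟩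
        have h0 := Set.mem_iInter.1 hy (0, m)
        simp only [Function.iterate_zero, Set.image_id, Set.mem_compl_iff] at h0
        exact h0 hyE
      have hw : f^[j] u = f^[j] v :=
        hsub1 (by simp only [Set.mem_preimage, Set.mem_singleton_iff]; exact h1)
          (by simp only [Set.mem_preimage, Set.mem_singleton_iff]; exact h2)
      have hwgood : f^[j] u ∈ GoodSet f := goodSet_mem_pre hy h1
      exact ih (f^[j] u) hwgood (by simp)
        (by simp only [Set.mem_preimage, Set.mem_singleton_iff]; exact hw.symm)

end AuxE2


/-- dichotomy for factor maps between minimal systems: either some fibre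
is a singleton, or all fibres have diameter bounded below. -/
theorem factor_map_dichotomy
    {X Y : Type} [MetricSpace X] [CompactSpace X] [MetricSpace Y] [CompactSpace Y]
    (T : X → X) (S : Y → Y) (hT : Continuous T) (hS : Continuous S)
    (π : X → Y) (hπ : IsFactorMap T S π)
    (hminX : IsMinimalTDS T) (hminY : IsMinimalTDS S) :
    (∃ y : Y, ∃ x : X, π ⁻¹' {y} = {x}) ∨
      (∃ ε > 0, ∀ y : Y, ε < Metric.diam (π ⁻¹' {y})) := by
  classical
  obtain ⟨hπc, hπs, hπe⟩ := hπ
  rcases isEmpty_or_nonempty X with hX | hX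
  · refine Or.inr ⟨1, one_pos, fun y => ?_⟩
    obtain ⟨x, -⟩ := hπs y
    exact isEmptyElim x
  by_cases hR : ∃ ε > 0, ∀ y : Y, ε < Metric.diam (π ⁻¹' {y})
  · exact Or.inr hR
  push_neg at hR
  left
  haveI : Nonempty Y := ⟨π (Classical.arbitrary X)⟩
  have hsc : ∀ (n : ℕ) (x : X), π (T^[n] x) = S^[n] (π x) := by
    have hsemi : Function.Semiconj π T S := fun x => congrFun hπe x
    exact fun n x => (hsemi.iterate_right n) x
  have hTsurj : Function.Surjective T := minimal_surj hT hminX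
  have hVdense : ∀ ε : ℝ, 0 < ε → Dense {y : Y | Metric.diam (π ⁻¹' {y}) < ε} := by
    intro ε hε
    rw [dense_iff_inter_open]
    intro W hWo hWne
    obtain ⟨N, hN⟩ := minimal_hitting hS hminY hWo hWne
    obtain ⟨γ, hγ, hγp⟩ := unif_iterates hT N (ε := ε / 3) (by positivity)
    obtain ⟨yt, hyt⟩ := hR (γ / 2) (by positivity)
    have hyt' : Metric.diam (π ⁻¹' {yt}) < γ := lt_of_le_of_lt hyt (by linarith)
    obtain ⟨U₃, hU₃o, hytU₃, hU₃d⟩ := tube_lemma' hπc hyt'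
    obtain ⟨m₀, hm₀N, hm₀⟩ := hN yt
    set O' := U₃ ∩ S^[m₀] ⁻¹' W with hO'def
    have hO'o : IsOpen O' := hU₃o.inter (hWo.preimage (hS.iterate m₀))
    have hO'ne : O'.Nonempty := ⟨yt, hytU₃, hm₀⟩
    obtain ⟨z, hzO', hzG⟩ :=
      (goodSet_open_inter hS hminY m₀).inter_open_nonempty O' hO'o hO'ne
    set y₀ := S^[m₀] z with hy₀def
    have hy₀G : y₀ ∈ GoodSet S := hzG
    have hfib : π ⁻¹' {y₀} = T^[m₀] '' (π ⁻¹' {z}) := by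
      apply Set.Subset.antisymm
      · intro x hx
        obtain ⟨w, rfl⟩ := (hTsurj.iterate m₀) x
        simp only [Set.mem_preimage, Set.mem_singleton_iff] at hx
        have h1 : S^[m₀] (π w) = y₀ := by rw [← hsc]; exact hx
        have h2 : π w = z :=
          goodSet_subsingleton m₀ y₀ hy₀G
            (by simp only [Set.mem_preimage, Set.mem_singleton_iff]; exact h1)
            (Set.mem_preimage.2 rfl)
        exact ⟨w, by simp only [Set.mem_preimage, Set.mem_singleton_iff]; exact h2, rfl⟩
      · rintro x ⟨w, hw, rfl⟩
        simp only [Set.mem_preimage, Set.mem_singleton_iff] at hw ⊢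
        rw [hsc, hw]
    have hd : Metric.diam (π ⁻¹' {y₀}) ≤ ε / 3 := by
      rw [hfib]
      apply Metric.diam_le_of_forall_dist_le (by positivity)
      rintro a ⟨u, hu, rfl⟩ b ⟨v, hv, rfl⟩
      apply hγp u v ?_ m₀ hm₀N
      simp only [Set.mem_preimage, Set.mem_singleton_iff] at hu hv
      have h1 : u ∈ π ⁻¹' U₃ := by
        simp only [Set.mem_preimage, hu]
        exact hzO'.1
      have h2 : v ∈ π ⁻¹' U₃ := by
        simp only [Set.mem_preimage, hv]
        exact hzO'.1
      have hb := Metric.dist_le_diam_of_mem (allBounded _) h1 h2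
      linarith
    exact ⟨y₀, hzO'.2, lt_of_le_of_lt hd (by linarith)⟩
  have hInt : Dense (⋂ k : ℕ, {y : Y | Metric.diam (π ⁻¹' {y}) < 1 / (k + 1 : ℝ)}) :=
    dense_iInter_of_isOpen (fun _ => V_open hπc _) (fun _ => hVdense _ (by positivity))
  obtain ⟨ys, hys⟩ := hInt.nonempty
  have hdiam0 : Metric.diam (π ⁻¹' {ys}) = 0 := by
    by_contra h
    have hpos : 0 < Metric.diam (π ⁻¹' {ys}) :=
      lt_of_le_of_ne Metric.diam_nonneg (Ne.symm h)
    obtain ⟨k, hk⟩ := exists_nat_one_div_lt hpos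
    have := Set.mem_iInter.1 hys k
    simp only [Set.mem_setOf_eq] at this
    linarith
  obtain ⟨x₀, hx₀⟩ := hπs ys
  refine ⟨ys, x₀, Set.Subset.antisymm ?_ ?_⟩
  · intro x' hx'
    have hb := Metric.dist_le_diam_of_mem (allBounded _) hx'
      (show x₀ ∈ π ⁻¹' {ys} by
        simp only [Set.mem_preimage, Set.mem_singleton_iff]; exact hx₀)
    rw [hdiam0] at hb
    have : x' = x₀ := dist_le_zero.1 hb
    simp [this]
  · intro x' hx'
    simp only [Set.mem_singleton_iff] at hx'
    simp only [Set.mem_preimage, hx', Set.mem_singleton_iff]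
    exact hx₀
end
end

section
/- Let (X,T) be a topological dynamical system on a compact metric space. Then (X,T) is diam-mean equicontinuous if and only if for each ε>0 there is δ>0 such that for every x∈X, sup_{N∈ℕ} (1/N) ∑_{i=1}^{N} diam(Tⁱ B_δ(x)) < ε. -/
open Filter Metric Set MeasureTheory

noncomputable section

variable {X Y : Type} [MetricSpace X] [MetricSpace Y]

section Aux
variable {X : Type} [MetricSpace X]

lemma avg_le' {f : ℕ → ℝ} {C : ℝ} (hC : 0 ≤ C) {n : ℕ}
    (h : ∀ i ∈ Finset.Icc 1 n, f i ≤ C) :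
    (∑ i ∈ Finset.Icc 1 n, f i) / n ≤ C := by
  rcases Nat.eq_zero_or_pos n with rfl | hn
  · simp [hC]
  · rw [div_le_iff₀ (by positivity)]
    calc ∑ i ∈ Finset.Icc 1 n, f i ≤ ∑ i ∈ Finset.Icc 1 n, C := Finset.sum_le_sum h
    _ = n * C := by simp [Nat.card_Icc, mul_comm]
    _ = C * n := mul_comm _ _

lemma diamAvg_nonneg' (T : X → X) (U : Set X) (n : ℕ) : 0 ≤ diamAvg T U n := by
  unfold diamAvg
  apply div_nonneg _ (by positivity)
  exact Finset.sum_nonneg fun i _ => Metric.diam_nonneg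

lemma diamAvg_mono' [CompactSpace X] (T : X → X) {U V : Set X} (h : U ⊆ V) (n : ℕ) :
    diamAvg T U n ≤ diamAvg T V n := by
  unfold diamAvg
  apply div_le_div_of_nonneg_right ?_ ?x
  case x => positivity
  apply Finset.sum_le_sum
  intro i _
  exact Metric.diam_mono (Set.image_mono h)
      (isCompact_univ.isBounded.subset (Set.subset_univ _))

lemma diamAvg_le_diam_univ' [CompactSpace X] (T : X → X) (U : Set X) (n : ℕ) :
    diamAvg T U n ≤ Metric.diam (Set.univ : Set X) := by
  apply avg_le' Metric.diam_nonneg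
  intro i _
  exact Metric.diam_mono (Set.subset_univ _) isCompact_univ.isBounded

end Aux

/-- diam-mean equicontinuity is equivalent to the uniform sup version. -/
theorem diamMeanEquicontinuous_iff_sup
    {X : Type} [MetricSpace X] [CompactSpace X] (T : X → X) (hT : Continuous T) :
    DiamMeanEquicontinuous T ↔
      ∀ ε > 0, ∃ δ > 0, ∀ x : X,
        (⨆ N : ℕ, diamAvg T (Metric.ball x δ) N) < ε := by
  constructor
  · intro h ε hε
    have key : ∀ x : X, ∃ δ > 0, ∀ N, diamAvg T (Metric.ball x δ) N ≤ ε/2 := by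
      intro x
      obtain ⟨δ, hδ, hl⟩ := h x (ε/4) (by linarith)
      have hb : IsBoundedUnder (· ≤ ·) atTop (diamAvg T (Metric.ball x δ)) :=
        Filter.isBoundedUnder_of
          ⟨Metric.diam (Set.univ : Set X), fun n => diamAvg_le_diam_univ' T _ n⟩
      obtain ⟨N0, hN0⟩ := Filter.eventually_atTop.1 (Filter.eventually_lt_of_limsup_lt hl hb)
      have huc : ∀ i : ℕ, ∃ η > 0, ∀ a b : X, dist a b < η →
          dist (T^[i] a) (T^[i] b) < ε/4 := by
        intro i
        have := CompactSpace.uniformContinuous_of_continuous (hT.iterate i)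
        rw [Metric.uniformContinuous_iff] at this
        obtain ⟨η, hη, hcl⟩ := this (ε/4) (by linarith)
        exact ⟨η, hη, fun a b hab => hcl hab⟩
      choose η hη hη2 using huc
      set c := (Finset.range (N0+1)).inf' (by simp) η with hc_def
      have hc : 0 < c := (Finset.lt_inf'_iff _).2 fun i _ => hη i
      refine ⟨min δ (c/2), by positivity, ?_⟩
      intro N
      by_cases hN : N0 ≤ N
      · have hsub0 : Metric.ball x (min δ (c/2)) ⊆ Metric.ball x δ :=
          Metric.ball_subset_ball (min_le_left _ _)
        have h1 := diamAvg_mono' T hsub0 N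
        have h2 := hN0 N hN
        linarith
      · push_neg at hN
        apply avg_le' (by linarith)
        intro i hi
        simp only [Finset.mem_Icc] at hi
        have hic : c ≤ η i :=
          Finset.inf'_le _ (Finset.mem_range.2 (by omega))
        apply Metric.diam_le_of_forall_dist_le (by linarith)
        rintro a ⟨p, hp, rfl⟩ b ⟨q, hq, rfl⟩
        have hpq : dist p q < c := by
          have h1 : dist p x < min δ (c/2) := hp
          have h2 : dist q x < min δ (c/2) := hq
          have h3 : min δ (c/2) ≤ c/2 := min_le_right _ _
          calc dist p q ≤ dist p x + dist x q := dist_triangle _ _ _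
            _ = dist p x + dist q x := by rw [dist_comm x q]
            _ < c := by linarith
        have := hη2 i p q (lt_of_lt_of_le hpq hic)
        linarith
    choose δ' hδ'pos hδ' using key
    have hcov : (Set.univ : Set X) ⊆ ⋃ x, Metric.ball x (δ' x / 2) := fun y _ =>
      Set.mem_iUnion.2 ⟨y, Metric.mem_ball_self (by have := hδ'pos y; positivity)⟩
    obtain ⟨t, ht⟩ := isCompact_univ.elim_finite_subcover
      (fun x => Metric.ball x (δ' x / 2)) (fun x => Metric.isOpen_ball) hcov
    by_cases hne : t.Nonempty
    · set δ := t.inf' hne (fun x => δ' x / 2) with hδdef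
      have hδpos : 0 < δ := (Finset.lt_inf'_iff _).2 fun x _ => by
        have := hδ'pos x; positivity
      refine ⟨δ, hδpos, ?_⟩
      intro y
      obtain ⟨x, hx, hyx⟩ := Set.mem_iUnion₂.1 (ht (Set.mem_univ y))
      have hsub : Metric.ball y δ ⊆ Metric.ball x (δ' x) := by
        intro z hz
        have h1 : dist z y < δ := hz
        have h2 : δ ≤ δ' x / 2 := Finset.inf'_le _ hx
        have h3 : dist y x < δ' x / 2 := hyx
        calc dist z x ≤ dist z y + dist y x := dist_triangle _ _ _
          _ < δ' x := by linarith
      have hbd : ∀ N, diamAvg T (Metric.ball y δ) N ≤ ε/2 := fun N =>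
        (diamAvg_mono' T hsub N).trans (hδ' x N)
      calc ⨆ N, diamAvg T (Metric.ball y δ) N ≤ ε/2 := ciSup_le hbd
        _ < ε := by linarith
    · refine ⟨1, one_pos, fun y => absurd (ht (Set.mem_univ y)) ?_⟩
      rw [Finset.not_nonempty_iff_eq_empty.1 hne]
      simp
  · intro h x ε hε
    obtain ⟨δ, hδ, hsup⟩ := h ε hε
    refine ⟨δ, hδ, lt_of_le_of_lt ?_ (hsup x)⟩
    apply Filter.limsup_le_of_le
    · exact Filter.isCoboundedUnder_le_of_le atTop fun n => diamAvg_nonneg' T _ n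
    · refine Filter.Eventually.of_forall fun n => le_ciSup ?_ n
      exact ⟨Metric.diam (Set.univ : Set X),
        Set.forall_mem_range.2 fun m => diamAvg_le_diam_univ' T _ m⟩
end
end

section
/- Let (X,T) be a topological dynamical system. A point x∈X is a Banach diam-mean equicontinuity point if and only if for every ε>0 there exists δ>0 such that BD*({i∈ℤ₊ : diam(Tⁱ B_δ(x)) > ε}) < ε. -/
open Filter Metric Set MeasureTheory

noncomputable section

variable {X Y : Type} [MetricSpace X] [MetricSpace Y]

section AuxBanach

open Finset in
private lemma ncard_inter_Ico_aux (F : Set ℕ) [DecidablePred (· ∈ F)] (M k : ℕ) :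
    ((F ∩ Set.Ico M k).ncard : ℝ)
      = (((Finset.Ico M k).filter (fun i => i ∈ F)).card : ℝ) := by
  congr 1
  rw [← Set.ncard_coe_finset]
  congr 1
  ext i
  simp [and_comm]

/-- Chebyshev-type lower bound for window sums. -/
private lemma cheb_aux {f : ℕ → ℝ} (hf0 : ∀ i, 0 ≤ f i) {ε : ℝ} {p : ℕ → Prop}
    [DecidablePred p] (hp : ∀ i, p i → ε ≤ f i) (w : Finset ℕ) :
    ε * ((w.filter p).card : ℝ) ≤ ∑ i ∈ w, f i := by
  have h1 : ε * ((w.filter p).card : ℝ) ≤ ∑ i ∈ w.filter p, f i := by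
    have := Finset.card_nsmul_le_sum (w.filter p) f ε
      (fun i hi => hp i (Finset.mem_filter.mp hi).2)
    simpa [nsmul_eq_mul, mul_comm] using this
  exact h1.trans (Finset.sum_le_sum_of_subset_of_nonneg (Finset.filter_subset _ _)
    fun i _ _ => hf0 i)

/-- Reverse bound: window sums are controlled by the count of large values. -/
private lemma rev_aux {f : ℕ → ℝ} (hf1 : ∀ i, f i ≤ 1) {c : ℝ} (hc : 0 ≤ c)
    {p : ℕ → Prop} [DecidablePred p] (hp : ∀ i, ¬ p i → f i ≤ c) (w : Finset ℕ) :
    ∑ i ∈ w, f i ≤ c * w.card + ((w.filter p).card : ℝ) := by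
  have hsplit : ∑ i ∈ w, f i
      = ∑ i ∈ w.filter p, f i + ∑ i ∈ w.filter (fun i => ¬ p i), f i :=
    (Finset.sum_filter_add_sum_filter_not w _ f).symm
  have h1 : ∑ i ∈ w.filter p, f i ≤ ((w.filter p).card : ℝ) := by
    calc ∑ i ∈ w.filter p, f i ≤ ∑ _i ∈ w.filter p, (1 : ℝ) :=
          Finset.sum_le_sum fun i _ => hf1 i
      _ = _ := by simp
  have h2 : ∑ i ∈ w.filter (fun i => ¬ p i), f i ≤ c * w.card := by
    calc ∑ i ∈ w.filter (fun i => ¬ p i), f i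
        ≤ ∑ _i ∈ w.filter (fun i => ¬ p i), c :=
          Finset.sum_le_sum fun i hi => hp i (Finset.mem_filter.mp hi).2
      _ = ((w.filter (fun i => ¬ p i)).card : ℝ) * c := by simp [mul_comm]
      _ ≤ (w.card : ℝ) * c := by
          have := Finset.card_filter_le w (fun i => ¬ p i)
          exact mul_le_mul_of_nonneg_right (by exact_mod_cast this) hc
      _ = c * w.card := mul_comm _ _
  linarith

end AuxBanach

/-- characterization of Banach diam-mean equicontinuity points via upper
Banach density. -/
theorem banachDiamMeanEqPt_iff_banachDensity
    {X : Type} [MetricSpace X] [CompactSpace X] (T : X → X) (hT : Continuous T)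
    (hdiam : Metric.diam (Set.univ : Set X) ≤ 1) (x : X) :
    BanachDiamMeanEqPt T x ↔
      ∀ ε > 0, ∃ δ > 0,
        banachDensity {i : ℕ | ε < Metric.diam (T^[i] '' Metric.ball x δ)} < ε := by
  classical
  have hbX : Bornology.IsBounded (Set.univ : Set X) := isCompact_univ.isBounded
  -- basic facts about the diameter sequence, for any δ
  have hf0 : ∀ (δ : ℝ) (i : ℕ), 0 ≤ Metric.diam (T^[i] '' Metric.ball x δ) :=
    fun _ _ => Metric.diam_nonneg
  have hf1 : ∀ (δ : ℝ) (i : ℕ), Metric.diam (T^[i] '' Metric.ball x δ) ≤ 1 :=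
    fun _ _ => le_trans (Metric.diam_mono (Set.subset_univ _) hbX) hdiam
  -- generic facts about window counts
  have hcount01 : ∀ (F : Set ℕ) (M n : ℕ),
      0 ≤ ((F ∩ Set.Ico M (M + n)).ncard : ℝ) / n ∧
      ((F ∩ Set.Ico M (M + n)).ncard : ℝ) / n ≤ 1 := by
    intro F M n
    constructor
    · positivity
    · rcases Nat.eq_zero_or_pos n with h | h
      · simp [h]
      · rw [div_le_one (by exact_mod_cast h)]
        have h1 : (F ∩ Set.Ico M (M + n)).ncard ≤ (Set.Ico M (M + n)).ncard :=
          Set.ncard_le_ncard Set.inter_subset_right (Set.finite_Ico _ _)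
        have h2 : (Set.Ico M (M + n)).ncard = n := by
          rw [← Finset.coe_Ico, Set.ncard_coe_finset]; simp
        exact_mod_cast h2 ▸ h1
  set g : Set ℕ → ℕ → ℝ :=
    fun F n => ⨆ M : ℕ, ((F ∩ Set.Ico M (M + n)).ncard : ℝ) / n with hgdef
  have hgBdd : ∀ (F : Set ℕ) (n : ℕ),
      BddAbove (Set.range fun M : ℕ => ((F ∩ Set.Ico M (M + n)).ncard : ℝ) / n) := by
    intro F n
    exact ⟨1, by rintro y ⟨M, rfl⟩; exact (hcount01 F M n).2⟩
  have hg0 : ∀ F n, 0 ≤ g F n := fun F n => Real.iSup_nonneg fun M => (hcount01 F M n).1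
  have hg1 : ∀ F n, g F n ≤ 1 := fun F n => ciSup_le fun M => (hcount01 F M n).2
  have hBDg : ∀ F : Set ℕ, banachDensity F = Filter.atTop.limsup (g F) := fun F => rfl
  -- generic facts about window averages
  have havg01 : ∀ (δ : ℝ) (M n : ℕ),
      0 ≤ (∑ i ∈ Finset.Icc (M + 1) (M + n),
          Metric.diam (T^[i] '' Metric.ball x δ)) / n ∧
      (∑ i ∈ Finset.Icc (M + 1) (M + n),
          Metric.diam (T^[i] '' Metric.ball x δ)) / n ≤ 1 := by
    intro δ M n
    constructor
    · exact div_nonneg (Finset.sum_nonneg fun i _ => hf0 δ i) (Nat.cast_nonneg n)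
    · rcases Nat.eq_zero_or_pos n with h | h
      · simp [h, Finset.Icc_eq_empty_of_lt (Nat.lt_succ_self M)]
      · rw [div_le_one (by exact_mod_cast h)]
        calc ∑ i ∈ Finset.Icc (M + 1) (M + n),
              Metric.diam (T^[i] '' Metric.ball x δ)
            ≤ ∑ _i ∈ Finset.Icc (M + 1) (M + n), (1 : ℝ) :=
              Finset.sum_le_sum fun i _ => hf1 δ i
          _ = ((Finset.Icc (M + 1) (M + n)).card : ℝ) := by simp
          _ = n := by rw [Nat.card_Icc]; congr 1; omega
  have hABdd : ∀ (δ : ℝ) (n : ℕ),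
      BddAbove (Set.range fun M : ℕ => (∑ i ∈ Finset.Icc (M + 1) (M + n),
        Metric.diam (T^[i] '' Metric.ball x δ)) / n) := by
    intro δ n
    exact ⟨1, by rintro y ⟨M, rfl⟩; exact (havg01 δ M n).2⟩
  have hA0 : ∀ δ n, 0 ≤ banachDiamAvg T (Metric.ball x δ) n :=
    fun δ n => Real.iSup_nonneg fun M => (havg01 δ M n).1
  have hA1 : ∀ δ n, banachDiamAvg T (Metric.ball x δ) n ≤ 1 :=
    fun δ n => ciSup_le fun M => (havg01 δ M n).2
  constructor
  · -- forward direction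
    intro H ε hε
    obtain ⟨δ, hδ, hlt⟩ := H (ε * ε / 2) (by positivity)
    refine ⟨δ, hδ, ?_⟩
    set f : ℕ → ℝ := fun i => Metric.diam (T^[i] '' Metric.ball x δ) with hfdef
    set F : Set ℕ := {i : ℕ | ε < f i} with hFdef
    set A : ℕ → ℝ := banachDiamAvg T (Metric.ball x δ) with hAdef
    -- key bound : for n ≥ 1, g F n ≤ A n / ε + 1 / n
    have key : ∀ n : ℕ, 1 ≤ n → g F n ≤ A n / ε + 1 / n := by
      intro n hn
      have hn0 : (0 : ℝ) < n := by exact_mod_cast hn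
      refine ciSup_le fun M => ?_
      -- count over the window, compared with a shifted window
      have hsub : Finset.Ico M (M + n) ⊆
          insert 0 (Finset.Icc ((M - 1) + 1) ((M - 1) + n)) := by
        intro i hi
        simp only [Finset.mem_Ico] at hi
        simp only [Finset.mem_insert, Finset.mem_Icc]
        omega
      have hcard : ((Finset.Ico M (M + n)).filter (fun i => i ∈ F)).card
          ≤ 1 + ((Finset.Icc ((M - 1) + 1) ((M - 1) + n)).filter (fun i => i ∈ F)).card := by
        calc ((Finset.Ico M (M + n)).filter (fun i => i ∈ F)).card
            ≤ ((insert 0 (Finset.Icc ((M - 1) + 1) ((M - 1) + n))).filter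
                (fun i => i ∈ F)).card :=
              Finset.card_le_card (Finset.filter_subset_filter _ hsub)
          _ ≤ _ := by
              rw [Finset.filter_insert]
              split
              · exact (Finset.card_insert_le _ _).trans (by omega)
              · omega
      have hcheb : ε * (((Finset.Icc ((M - 1) + 1) ((M - 1) + n)).filter
            (fun i => i ∈ F)).card : ℝ)
          ≤ ∑ i ∈ Finset.Icc ((M - 1) + 1) ((M - 1) + n), f i :=
        cheb_aux (fun i => hf0 δ i) (fun i hi => le_of_lt hi) _
      have hsumle : (∑ i ∈ Finset.Icc ((M - 1) + 1) ((M - 1) + n), f i) / n ≤ A n :=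
        le_ciSup (hABdd δ n) (M - 1)
      have hc' : (((Finset.Icc ((M - 1) + 1) ((M - 1) + n)).filter
            (fun i => i ∈ F)).card : ℝ) ≤ n * (A n / ε) := by
        rw [← le_div_iff₀' hε] at *
        have : (∑ i ∈ Finset.Icc ((M - 1) + 1) ((M - 1) + n), f i) ≤ n * A n := by
          rw [div_le_iff₀ hn0] at hsumle; linarith [hsumle]
        calc (((Finset.Icc ((M - 1) + 1) ((M - 1) + n)).filter
              (fun i => i ∈ F)).card : ℝ)
            ≤ (∑ i ∈ Finset.Icc ((M - 1) + 1) ((M - 1) + n), f i) / ε := hcheb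
          _ ≤ (n * A n) / ε := by gcongr
          _ = n * (A n / ε) := by ring
      rw [ncard_inter_Ico_aux]
      have : (((Finset.Ico M (M + n)).filter (fun i => i ∈ F)).card : ℝ)
          ≤ 1 + n * (A n / ε) := by
        have := hcard
        have hc2 : (((Finset.Ico M (M + n)).filter (fun i => i ∈ F)).card : ℝ)
            ≤ 1 + (((Finset.Icc ((M - 1) + 1) ((M - 1) + n)).filter
              (fun i => i ∈ F)).card : ℝ) := by exact_mod_cast this
        linarith
      calc (((Finset.Ico M (M + n)).filter (fun i => i ∈ F)).card : ℝ) / n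
          ≤ (1 + n * (A n / ε)) / n := by gcongr
        _ = A n / ε + 1 / n := by field_simp; ring
    -- pass to the limsup
    rw [hBDg]
    have hev1 : ∀ᶠ n : ℕ in atTop, A n < ε * ε / 2 :=
      eventually_lt_of_limsup_lt hlt (Filter.isBoundedUnder_of ⟨1, fun n => hA1 δ n⟩)
    have hev2 : ∀ᶠ n : ℕ in atTop, (1 : ℝ) / n < ε / 4 :=
      tendsto_one_div_atTop_nhds_zero_nat.eventually_lt_const (by positivity)
    have hev3 : ∀ᶠ n : ℕ in atTop, 1 ≤ n := Filter.eventually_ge_atTop 1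
    have hev : ∀ᶠ n : ℕ in atTop, g F n ≤ ε / 2 + ε / 4 := by
      filter_upwards [hev1, hev2, hev3] with n h1 h2 h3
      have hA' : A n / ε < ε / 2 := by
        rw [div_lt_iff₀ hε]; nlinarith
      have := key n h3
      linarith
    have hls : Filter.atTop.limsup (g F) ≤ ε / 2 + ε / 4 :=
      Filter.limsup_le_of_le
        (Filter.isCoboundedUnder_le_of_le Filter.atTop (fun n => hg0 F n)) hev
    linarith
  · -- reverse direction
    intro H ε hε
    obtain ⟨δ, hδ, hBD⟩ := H (ε / 3) (by positivity)
    refine ⟨δ, hδ, ?_⟩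
    set f : ℕ → ℝ := fun i => Metric.diam (T^[i] '' Metric.ball x δ) with hfdef
    set F : Set ℕ := {i : ℕ | ε / 3 < f i} with hFdef
    set A : ℕ → ℝ := banachDiamAvg T (Metric.ball x δ) with hAdef
    have key : ∀ n : ℕ, 1 ≤ n → A n ≤ ε / 3 + g F n := by
      intro n hn
      have hn0 : (0 : ℝ) < n := by exact_mod_cast hn
      refine ciSup_le fun M => ?_
      have hrev : ∑ i ∈ Finset.Icc (M + 1) (M + n), f i
          ≤ (ε / 3) * (Finset.Icc (M + 1) (M + n)).card
            + (((Finset.Icc (M + 1) (M + n)).filter (fun i => i ∈ F)).card : ℝ) :=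
        rev_aux (fun i => hf1 δ i) (by positivity) (fun i hi => not_lt.mp hi) _
      have hcardIcc : ((Finset.Icc (M + 1) (M + n)).card : ℝ) = n := by
        have : (Finset.Icc (M + 1) (M + n)).card = n := by rw [Nat.card_Icc]; omega
        exact_mod_cast this
      have hwin : (Finset.Icc (M + 1) (M + n)) = Finset.Ico (M + 1) ((M + 1) + n) := by
        ext i
        simp only [Finset.mem_Icc, Finset.mem_Ico]
        omega
      have hcnt : (((Finset.Icc (M + 1) (M + n)).filter (fun i => i ∈ F)).card : ℝ)
          = ((F ∩ Set.Ico (M + 1) ((M + 1) + n)).ncard : ℝ) := by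
        rw [hwin, ncard_inter_Ico_aux]
      have hle : ((F ∩ Set.Ico (M + 1) ((M + 1) + n)).ncard : ℝ) / n ≤ g F n :=
        le_ciSup (hgBdd F n) (M + 1)
      have hsum : ∑ i ∈ Finset.Icc (M + 1) (M + n), f i
          ≤ (ε / 3) * n + ((F ∩ Set.Ico (M + 1) ((M + 1) + n)).ncard : ℝ) := by
        rw [← hcnt]; calc _ ≤ _ := hrev
                         _ = _ := by rw [hcardIcc]
      calc (∑ i ∈ Finset.Icc (M + 1) (M + n), f i) / n
          ≤ ((ε / 3) * n + ((F ∩ Set.Ico (M + 1) ((M + 1) + n)).ncard : ℝ)) / n := by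
            gcongr
        _ = ε / 3 + ((F ∩ Set.Ico (M + 1) ((M + 1) + n)).ncard : ℝ) / n := by
            field_simp
        _ ≤ ε / 3 + g F n := by linarith
    rw [hBDg] at hBD
    have hev1 : ∀ᶠ n : ℕ in atTop, g F n < ε / 3 :=
      eventually_lt_of_limsup_lt hBD (Filter.isBoundedUnder_of ⟨1, fun n => hg1 F n⟩)
    have hev3 : ∀ᶠ n : ℕ in atTop, 1 ≤ n := Filter.eventually_ge_atTop 1
    have hev : ∀ᶠ n : ℕ in atTop, A n ≤ ε / 3 + ε / 3 := by
      filter_upwards [hev1, hev3] with n h1 h3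
      have := key n h3
      linarith
    have hls : Filter.atTop.limsup A ≤ ε / 3 + ε / 3 :=
      Filter.limsup_le_of_le
        (Filter.isCoboundedUnder_le_of_le Filter.atTop (fun n => hA0 δ n)) hev
    calc Filter.atTop.limsup A ≤ ε / 3 + ε / 3 := hls
      _ < ε := by linarith
end
end

section
/- Let (X,T) be a minimal mean equicontinuous topological dynamical system such that π_eq: X→X_eq is almost 1-1. Then every point x∈X is frequently stable: for every ε>0 there exists δ>0 such that the upper density of {i∈ℤ₊ : diam(Tⁱ B_δ(x)) > ε} is strictly less than 1. -/
open Filter Metric Set MeasureTheory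

noncomputable section

variable {X Y : Type} [MetricSpace X] [MetricSpace Y]

lemma aux_density {L : ℕ} (hL : 0 < L) {R B : Set ℕ}
    (hdisj : ∀ i ∈ B, i ∉ R)
    (synd : ∀ m : ℕ, ∃ i, m ≤ i ∧ i < m + L ∧ i ∈ R) :
    upperDensity B < 1 := by
  choose r hr1 hr2 hr3 using fun j => synd (j * L)
  have rmono : StrictMono r := strictMono_nat_of_lt_succ fun j => by
    calc r j < j * L + L := hr2 j
      _ = (j + 1) * L := by ring
      _ ≤ r (j + 1) := hr1 (j + 1)
  have count : ∀ n : ℕ, (B ∩ Set.Ico 0 n).ncard ≤ n - n / L := by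
    intro n
    set k := n / L with hk
    have himg : r '' Set.Iio k ⊆ Set.Ico 0 n := by
      rintro _ ⟨j, hj, rfl⟩
      simp only [Set.mem_Iio] at hj
      refine ⟨Nat.zero_le _, ?_⟩
      calc r j < j * L + L := hr2 j
        _ = (j + 1) * L := by ring
        _ ≤ k * L := Nat.mul_le_mul_right _ hj
        _ ≤ n := Nat.div_mul_le_self n L
    have hsub : B ∩ Set.Ico 0 n ⊆ Set.Ico 0 n \ (r '' Set.Iio k) := by
      rintro i ⟨hiB, hin⟩
      refine ⟨hin, ?_⟩
      rintro ⟨j, _, rfl⟩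
      exact hdisj _ hiB (hr3 j)
    have hfinIio : (r '' Set.Iio k).Finite := (Set.finite_Iio k).image r
    have hcard : (Set.Ico 0 n \ (r '' Set.Iio k)).ncard = n - k := by
      rw [Set.ncard_diff himg hfinIio]
      rw [Set.ncard_image_of_injective _ rmono.injective]
      rw [← Finset.coe_Ico, ← Finset.coe_Iio, Set.ncard_coe_finset, Set.ncard_coe_finset]
      simp
    calc (B ∩ Set.Ico 0 n).ncard
        ≤ (Set.Ico 0 n \ (r '' Set.Iio k)).ncard :=
          Set.ncard_le_ncard hsub ((Set.finite_Ico 0 n).diff)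
      _ = n - k := hcard
  have hLpos : (0:ℝ) < L := by exact_mod_cast hL
  have hconst : (1:ℝ) - 1 / (2 * L) < 1 := by
    have : (0:ℝ) < 1 / (2 * L) := by positivity
    linarith
  have hbound : ∀ᶠ n : ℕ in atTop,
      ((B ∩ Set.Ico 0 n).ncard : ℝ) / n ≤ 1 - 1 / (2 * L) := by
    filter_upwards [Filter.eventually_ge_atTop (2 * L)] with n hn
    have hk := count n
    set k := n / L with hkdef
    have hn0 : 0 < n := by omega
    have hkn : k ≤ n := Nat.div_le_self n L
    have hk1 : 1 ≤ k := by
      rw [hkdef, Nat.le_div_iff_mul_le hL]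
      omega
    have h2 : n ≤ 2 * k * L := by
      have hmlt : n % L < L := Nat.mod_lt _ hL
      have hLk : L ≤ L * k := Nat.le_mul_of_pos_right L hk1
      calc n = L * k + n % L := (Nat.div_add_mod n L).symm
        _ ≤ L * k + L := by omega
        _ ≤ L * k + L * k := by omega
        _ = 2 * k * L := by ring
    have hcast1 : ((B ∩ Set.Ico 0 n).ncard : ℝ) ≤ (n : ℝ) - k := by
      calc ((B ∩ Set.Ico 0 n).ncard : ℝ) ≤ ((n - k : ℕ) : ℝ) := by exact_mod_cast hk
        _ = (n : ℝ) - k := by rw [Nat.cast_sub hkn]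
    have hn0' : (0:ℝ) < n := by exact_mod_cast hn0
    rw [div_le_iff₀ hn0']
    have h2' : (n : ℝ) ≤ 2 * k * L := by exact_mod_cast h2
    have hinv : 1 / (2 * (L:ℝ)) * (2 * (L:ℝ)) = 1 := by field_simp
    nlinarith [hcast1, h2', hinv, hLpos, hn0']
  have hcob : Filter.IsCoboundedUnder (· ≤ ·) Filter.atTop
      (fun n : ℕ => ((B ∩ Set.Ico 0 n).ncard : ℝ) / n) := by
    apply Filter.IsCoboundedUnder.of_frequently_ge (a := 0)
    apply Filter.Frequently.of_forall
    intro n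
    positivity
  calc upperDensity B ≤ 1 - 1 / (2 * L) := Filter.limsup_le_of_le hcob hbound
    _ < 1 := hconst

/-- for a minimal mean equicontinuous system whose maximal
equicontinuous factor map is almost 1-1, every point is frequently stable. -/
theorem frequently_stable_of_almost_one_to_one
    {X Y : Type} [MetricSpace X] [CompactSpace X] [MetricSpace Y] [CompactSpace Y]
    (T : X → X) (S : Y → Y) (hT : Continuous T) (hS : Continuous S)
    (π : X → Y) (hmef : IsMEF T S π)
    (hmin : IsMinimalTDS T) (hme : MeanEquicontinuous T)
    (h11 : ∃ y : Y, ∃ x : X, π ⁻¹' {y} = {x}) :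
    ∀ x : X, ∀ ε > 0, ∃ δ > 0,
      upperDensity {i : ℕ | ε < Metric.diam (T^[i] '' Metric.ball x δ)} < 1 := by
  obtain ⟨y0, x0, hfib⟩ := h11
  obtain ⟨⟨hπc, hπsurj, hcomm⟩, heq, _⟩ := hmef
  have hπx0 : π x0 = y0 := by
    have h : x0 ∈ π ⁻¹' {y0} := by rw [hfib]; rfl
    simpa using h
  have hsemi : ∀ (i : ℕ) (z : X), π (T^[i] z) = S^[i] (π z) := by
    intro i
    induction i with
    | zero => intro z; simp
    | succ i ih =>
      intro z
      rw [Function.iterate_succ_apply, ih (T z), show π (T z) = S (π z) from congrFun hcomm z,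
        ← Function.iterate_succ_apply S i (π z)]
  intro x ε hε
  -- Step 1: shrink the fibre: preimage of a small ball around y0 is inside ball x0 (ε/2)
  have hstep2 : ∃ ρ > 0, π ⁻¹' Metric.ball y0 ρ ⊆ Metric.ball x0 (ε / 2) := by
    have hC : IsCompact ((Metric.ball x0 (ε / 2))ᶜ) :=
      (Metric.isOpen_ball.isClosed_compl).isCompact
    have hclosed : IsClosed (π '' (Metric.ball x0 (ε / 2))ᶜ) := (hC.image hπc).isClosed
    have hy0 : y0 ∈ (π '' (Metric.ball x0 (ε / 2))ᶜ)ᶜ := by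
      rintro ⟨z, hz, hπz⟩
      have hz' : z ∈ π ⁻¹' {y0} := by simp [hπz]
      rw [hfib] at hz'
      have : z = x0 := hz'
      exact hz (by rw [this]; exact Metric.mem_ball_self (half_pos hε))
    obtain ⟨ρ, hρ, hball⟩ := Metric.isOpen_iff.mp hclosed.isOpen_compl y0 hy0
    refine ⟨ρ, hρ, fun z hz => ?_⟩
    by_contra hz2
    exact hball hz ⟨z, hz2, rfl⟩
  obtain ⟨ρ, hρpos, hρ⟩ := hstep2
  -- Step 2: equicontinuity of S
  obtain ⟨δ₂, hδ₂pos, hec⟩ := heq (ρ / 2) (half_pos hρpos)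
  -- Step 3: continuity of π at x
  obtain ⟨δ, hδpos, hcont⟩ := Metric.continuous_iff.mp hπc x δ₂ hδ₂pos
  refine ⟨δ, hδpos, ?_⟩
  set R : Set ℕ := {i : ℕ | dist (S^[i] (π x)) y0 < ρ / 2} with hRdef
  -- Key: at return times the image of the δ-ball has small diameter
  have key : ∀ i ∈ R, Metric.diam (T^[i] '' Metric.ball x δ) ≤ ε := by
    intro i hi
    have hsub : T^[i] '' Metric.ball x δ ⊆ Metric.ball x0 (ε / 2) := by
      rintro _ ⟨x', hx', rfl⟩
      apply hρ
      have h1 : dist (S^[i] (π x')) (S^[i] (π x)) < ρ / 2 :=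
        hec (π x') (π x) (hcont x' hx') i
      have h2 : dist (S^[i] (π x)) y0 < ρ / 2 := hi
      have : dist (π (T^[i] x')) y0 < ρ := by
        rw [hsemi i x']
        calc dist (S^[i] (π x')) y0
            ≤ dist (S^[i] (π x')) (S^[i] (π x)) + dist (S^[i] (π x)) y0 := dist_triangle _ _ _
          _ < ρ / 2 + ρ / 2 := add_lt_add h1 h2
          _ = ρ := by ring
      exact this
    calc Metric.diam (T^[i] '' Metric.ball x δ)
        ≤ Metric.diam (Metric.ball x0 (ε / 2)) :=
          Metric.diam_mono hsub Metric.isBounded_ball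
      _ ≤ 2 * (ε / 2) := Metric.diam_ball (le_of_lt (half_pos hε))
      _ = ε := by ring
  -- Step 4: syndeticity of R via compactness and minimality
  have hWopen : IsOpen (π ⁻¹' Metric.ball y0 (ρ / 2)) :=
    Metric.isOpen_ball.preimage hπc
  have hWne : (π ⁻¹' Metric.ball y0 (ρ / 2)).Nonempty :=
    ⟨x0, by simp [hπx0, Metric.mem_ball, half_pos hρpos]⟩
  have hcover : (Set.univ : Set X) ⊆
      ⋃ n : ℕ, (fun z : X => T^[n] z) ⁻¹' (π ⁻¹' Metric.ball y0 (ρ / 2)) := by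
    intro z _
    obtain ⟨w, ⟨n, rfl⟩, hw⟩ := (hmin z).exists_mem_open hWopen hWne
    exact Set.mem_iUnion.mpr ⟨n, hw⟩
  obtain ⟨t, ht⟩ := isCompact_univ.elim_finite_subcover
    (fun n : ℕ => (fun z : X => T^[n] z) ⁻¹' (π ⁻¹' Metric.ball y0 (ρ / 2)))
    (fun n => hWopen.preimage (hT.iterate n)) hcover
  set N := t.sup id with hN
  have synd : ∀ m : ℕ, ∃ i, m ≤ i ∧ i < m + (N + 1) ∧ i ∈ R := by
    intro m
    have hm := ht (Set.mem_univ (T^[m] x))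
    rw [Set.mem_iUnion₂] at hm
    obtain ⟨n, hnt, hn⟩ := hm
    refine ⟨m + n, Nat.le_add_right _ _, ?_, ?_⟩
    · have : n ≤ N := Finset.le_sup (f := id) hnt
      omega
    · have h1 : T^[n] (T^[m] x) ∈ π ⁻¹' Metric.ball y0 (ρ / 2) := hn
      have h2 : T^[m + n] x ∈ π ⁻¹' Metric.ball y0 (ρ / 2) := by
        rwa [Nat.add_comm, Function.iterate_add_apply]
      show dist (S^[m + n] (π x)) y0 < ρ / 2
      rw [← hsemi (m + n) x]
      exact h2
  exact aux_density (Nat.succ_pos N)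
    (fun i hi hiR => absurd (key i hiR) (not_le.mpr hi)) synd
end
end

section
/- Let (X,T) be a minimal topological dynamical system whose maximal equicontinuous factor map π_eq: X→X_eq is regular, i.e. ν_eq({y : #π_eq⁻¹(y)=1}) = 1, where ν_eq is the unique invariant measure on X_eq. Then (X,T) is Banach diam-mean equicontinuous: for every ε>0 there exists δ>0 such that limsup_{N-M→∞} (1/(N-M)) ∑_{i=M+1}^{N} diam(Tⁱ B_δ(x)) < ε for every x∈X. -/
open Filter Metric Set MeasureTheory

noncomputable section

variable {X Y : Type} [MetricSpace X] [MetricSpace Y]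

lemma aux_bound {Y : Type} [MetricSpace Y] [CompactSpace Y] (f : Y → ℝ) (hf : Continuous f) :
    ∃ C : ℝ, 0 ≤ C ∧ ∀ z, |f z| ≤ C := by
  rcases isEmpty_or_nonempty Y with h | h
  · exact ⟨0, le_refl 0, fun z => isEmptyElim z⟩
  · obtain ⟨z₀, -, hz⟩ := isCompact_univ.exists_isMaxOn univ_nonempty
      (continuous_abs.comp hf).continuousOn
    exact ⟨|f z₀|, abs_nonneg _, fun z => isMaxOn_iff.mp hz z (mem_univ z)⟩

lemma aux_orbit {Y : Type} [MetricSpace Y] [CompactSpace Y] (S : Y → Y) (hS : Continuous S)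
    (hmin : IsMinimalTDS S) {δ : ℝ} (hδ : 0 < δ) :
    ∃ K : ℕ, ∀ y z : Y, ∃ m ≤ K, dist (S^[m] y) z < δ := by
  have step1 : ∀ z : Y, ∃ K : ℕ, ∀ y : Y, ∃ m ≤ K, dist (S^[m] y) z < δ / 2 := by
    intro z
    have hcov : (univ : Set Y) ⊆ ⋃ m : ℕ, (S^[m]) ⁻¹' ball z (δ / 2) := by
      intro y _
      obtain ⟨p, ⟨m, rfl⟩, hp⟩ :=
        (hmin y).exists_mem_open isOpen_ball ⟨z, mem_ball_self (half_pos hδ)⟩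
      exact mem_iUnion.mpr ⟨m, hp⟩
    obtain ⟨t, ht⟩ := isCompact_univ.elim_finite_subcover _
      (fun m : ℕ => isOpen_ball.preimage (hS.iterate m)) hcov
    refine ⟨t.sup id, fun y => ?_⟩
    obtain ⟨m, hmt, hm⟩ := mem_iUnion₂.mp (ht (mem_univ y))
    exact ⟨m, Finset.le_sup (f := id) hmt, hm⟩
  choose F hF using step1
  have hcov2 : (univ : Set Y) ⊆ ⋃ z : Y, ball z (δ / 2) :=
    fun y _ => mem_iUnion.mpr ⟨y, mem_ball_self (half_pos hδ)⟩
  obtain ⟨t, ht⟩ := isCompact_univ.elim_finite_subcover _ (fun z : Y => isOpen_ball) hcov2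
  refine ⟨t.sup F, fun y z => ?_⟩
  obtain ⟨w, hwt, hw⟩ := mem_iUnion₂.mp (ht (mem_univ z))
  obtain ⟨m, hmF, hm⟩ := hF w y
  refine ⟨m, le_trans hmF (Finset.le_sup hwt), ?_⟩
  have h1 : dist z w < δ / 2 := mem_ball.mp hw
  calc dist (S^[m] y) z ≤ dist (S^[m] y) w + dist w z := dist_triangle _ _ _
    _ < δ / 2 + δ / 2 := by rw [dist_comm w z]; exact add_lt_add hm h1
    _ = δ := add_halves δ

lemma aux_shift {Y : Type} (h : Y → ℝ) (S : Y → Y) (m n : ℕ) (y : Y) :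
    ∑ i ∈ Finset.Ioc 0 n, h (S^[i] (S^[m] y)) = ∑ i ∈ Finset.Ioc m (m + n), h (S^[i] y) := by
  rw [show Finset.Ioc m (m + n) = Finset.map (addLeftEmbedding m) (Finset.Ioc 0 n) by
    rw [Finset.map_add_left_Ioc]; simp]
  rw [Finset.sum_map]
  refine Finset.sum_congr rfl fun i _ => ?_
  simp only [addLeftEmbedding_apply]
  rw [add_comm m i, Function.iterate_add_apply]

lemma aux_nested {X : Type} [MetricSpace X] [CompactSpace X] (F : ℕ → Set X)
    (hcl : ∀ n, IsClosed (F n)) (hdec : ∀ n, F (n + 1) ⊆ F n) {U : Set X} (hU : IsOpen U)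
    (hsub : (⋂ n, F n) ⊆ U) : ∃ n, F n ⊆ U := by
  by_contra h
  push_neg at h
  have hne : ∀ n, (F n ∩ Uᶜ).Nonempty := by
    intro n
    obtain ⟨z, hz1, hz2⟩ := not_subset.mp (h n)
    exact ⟨z, hz1, hz2⟩
  obtain ⟨z, hz⟩ := IsCompact.nonempty_iInter_of_sequence_nonempty_isCompact_isClosed
    (fun n => F n ∩ Uᶜ) (fun n => inter_subset_inter_left _ (hdec n)) hne
    ((hcl 0).inter hU.isClosed_compl).isCompact
    (fun n => (hcl n).inter hU.isClosed_compl)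
  simp only [mem_iInter, mem_inter_iff, mem_compl_iff] at hz
  exact (hz 0).2 (hsub (mem_iInter.mpr fun n => (hz n).1))

lemma aux_iInter {Y : Type} [MetricSpace Y] (y₀ : Y) (κ : ℝ) :
    (⋂ n : ℕ, Metric.closedBall y₀ (κ + 1 / (n + 1))) = Metric.closedBall y₀ κ := by
  ext z
  simp only [mem_iInter, mem_closedBall]
  constructor
  · intro hz
    refine le_of_forall_pos_le_add fun ε hε => ?_
    obtain ⟨n, hn⟩ := exists_nat_one_div_lt hε
    exact le_trans (hz n) (by linarith)
  · intro hz n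
    have h1 : (0:ℝ) < 1 / ((n:ℝ) + 1) := by positivity
    linarith

lemma aux_open {X Y : Type} [MetricSpace X] [CompactSpace X] [MetricSpace Y]
    (π : X → Y) (hπ : Continuous π) (κ c : ℝ) :
    IsOpen {y : Y | Metric.diam (π ⁻¹' Metric.closedBall y κ) < c} := by
  have hXb : ∀ s : Set X, Bornology.IsBounded s :=
    fun s => isCompact_univ.isBounded.subset (subset_univ s)
  rw [Metric.isOpen_iff]
  intro y₀ hy₀
  simp only [mem_setOf_eq] at hy₀
  set D := Metric.diam (π ⁻¹' Metric.closedBall y₀ κ) with hD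
  set t := (c - D) / 3 with ht
  have htpos : 0 < t := by rw [ht]; linarith
  have hdec : ∀ n : ℕ, π ⁻¹' Metric.closedBall y₀ (κ + 1 / (n + 1 + 1)) ⊆
      π ⁻¹' Metric.closedBall y₀ (κ + 1 / (n + 1)) := by
    intro n
    refine preimage_mono (closedBall_subset_closedBall ?_)
    have h1 : (1:ℝ) / ((n:ℝ) + 1 + 1) ≤ 1 / ((n:ℝ) + 1) :=
      one_div_le_one_div_of_le (by positivity) (by linarith)
    linarith
  obtain ⟨n, hn⟩ := aux_nested (fun n : ℕ => π ⁻¹' Metric.closedBall y₀ (κ + 1 / (n + 1)))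
    (fun n => (Metric.isClosed_closedBall.preimage hπ))
    (by intro n; push_cast; exact hdec n)
    (Metric.isOpen_thickening (δ := t) (E := π ⁻¹' Metric.closedBall y₀ κ))
    (by
      rw [← preimage_iInter, aux_iInter]
      exact Metric.self_subset_thickening htpos _)
  refine ⟨1 / (n + 1), by positivity, fun y' hy' => ?_⟩
  simp only [mem_setOf_eq]
  have hy'd : dist y' y₀ < 1 / (n + 1) := mem_ball.mp hy'
  have hsub : π ⁻¹' Metric.closedBall y' κ ⊆ π ⁻¹' Metric.closedBall y₀ (κ + 1 / (n + 1)) := by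
    refine preimage_mono fun z hz => ?_
    rw [mem_closedBall] at hz ⊢
    calc dist z y₀ ≤ dist z y' + dist y' y₀ := dist_triangle _ _ _
      _ ≤ κ + 1 / (n + 1) := by linarith
  calc Metric.diam (π ⁻¹' Metric.closedBall y' κ)
      ≤ Metric.diam (Metric.thickening t (π ⁻¹' Metric.closedBall y₀ κ)) :=
        Metric.diam_mono (hsub.trans hn) (hXb _)
    _ ≤ D + 2 * t := Metric.diam_thickening_le _ htpos.le
    _ < c := by rw [ht]; linarith

lemma aux_unif {Y : Type} [MetricSpace Y] [CompactSpace Y] [MeasurableSpace Y] [BorelSpace Y]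
    (S : Y → Y) (hS : Continuous S) (heq : IsEquicontinuousSys S) (hmin : IsMinimalTDS S)
    (ν : Measure Y) [IsProbabilityMeasure ν] (hinv : Measure.map S ν = ν)
    (f : Y → ℝ) (hf : Continuous f) {c : ℝ} (hc : 0 < c) :
    ∀ᶠ n : ℕ in atTop, ∀ y : Y,
      ∑ i ∈ Finset.Ioc 0 n, f (S^[i] y) ≤ n * ((∫ z, f z ∂ν) + c) := by
  have hY : Nonempty Y := by
    by_contra h
    have h1 : (univ : Set Y) = ∅ := univ_eq_empty_iff.mpr (not_nonempty_iff.mp h)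
    have h2 := measure_univ (μ := ν)
    rw [h1, measure_empty] at h2
    exact zero_ne_one h2
  obtain ⟨C, hC0, hC⟩ := aux_bound f hf
  obtain ⟨δ₁, hδ₁, hf1⟩ := Metric.uniformContinuous_iff.mp
    (CompactSpace.uniformContinuous_of_continuous hf) (c / 4) (by positivity)
  obtain ⟨δ₂, hδ₂, hS2⟩ := heq δ₁ hδ₁
  obtain ⟨K, hK⟩ := aux_orbit S hS hmin hδ₂
  have hInt : ∀ g : Y → ℝ, Continuous g → Integrable g ν := fun g hg =>
    hg.integrable_of_hasCompactSupport (IsClosed.isCompact (isClosed_tsupport g))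
  have hmapi : ∀ i : ℕ, Measure.map (S^[i]) ν = ν := by
    intro i
    induction i with
    | zero => simpa using Measure.map_id
    | succ i ih =>
      rw [Function.iterate_succ,
        ← Measure.map_map (hS.iterate i).measurable hS.measurable, hinv, ih]
  have hint : ∀ i : ℕ, ∫ z, f (S^[i] z) ∂ν = ∫ z, f z ∂ν := by
    intro i
    conv_rhs => rw [← hmapi i]
    rw [integral_map (hS.iterate i).measurable.aemeasurable hf.aestronglyMeasurable]
  have hy0 : ∀ n : ℕ, ∃ y₀ : Y, ∑ i ∈ Finset.Ioc 0 n, f (S^[i] y₀) ≤ n * ∫ z, f z ∂ν := by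
    intro n
    by_contra h
    push_neg at h
    set A : Y → ℝ := fun y => ∑ i ∈ Finset.Ioc 0 n, f (S^[i] y) with hA
    have hAc : Continuous A := continuous_finset_sum _ (fun i _ => hf.comp (hS.iterate i))
    have hAint : ∫ y, A y ∂ν = n * ∫ z, f z ∂ν := by
      simp only [hA]
      rw [integral_finset_sum (Finset.Ioc 0 n) (f := fun i z => f (S^[i] z))
        (fun i _ => hInt _ (hf.comp (hS.iterate i)))]
      simp only [hint]
      rw [Finset.sum_const, Nat.card_Ioc, Nat.sub_zero, nsmul_eq_mul]
    obtain ⟨ymin, -, hymin⟩ := isCompact_univ.exists_isMinOn univ_nonempty hAc.continuousOn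
    have h1 : n * ∫ z, f z ∂ν < A ymin := h ymin
    have h2 : A ymin ≤ ∫ y, A y ∂ν := by
      have h3 : ∫ (_ : Y), A ymin ∂ν = A ymin := by simp
      rw [← h3]
      exact integral_mono (integrable_const _) (hInt _ hAc)
        (fun y => isMinOn_iff.mp hymin y (mem_univ y))
    rw [hAint] at h2
    linarith
  obtain ⟨N, hN⟩ := exists_nat_ge (2 * K * C / (c / 2))
  filter_upwards [eventually_ge_atTop N] with n hn
  intro y
  obtain ⟨y₀, hy₀⟩ := hy0 n
  obtain ⟨m, hmK, hm⟩ := hK y y₀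
  set w := S^[m] y with hw
  have hterm : ∀ i : ℕ, f (S^[i] w) ≤ f (S^[i] y₀) + c / 4 := by
    intro i
    have h1 := hf1 (hS2 _ _ hm i)
    rw [Real.dist_eq] at h1
    have h2 := (abs_lt.mp h1).2
    linarith
  have hsum_w : ∑ i ∈ Finset.Ioc 0 n, f (S^[i] w) ≤ n * (∫ z, f z ∂ν) + n * (c / 4) := by
    calc ∑ i ∈ Finset.Ioc 0 n, f (S^[i] w)
        ≤ ∑ i ∈ Finset.Ioc 0 n, (f (S^[i] y₀) + c / 4) :=
          Finset.sum_le_sum fun i _ => hterm i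
      _ = (∑ i ∈ Finset.Ioc 0 n, f (S^[i] y₀)) + n * (c / 4) := by
          rw [Finset.sum_add_distrib, Finset.sum_const, Nat.card_Ioc, Nat.sub_zero, nsmul_eq_mul]
      _ ≤ n * (∫ z, f z ∂ν) + n * (c / 4) := by linarith
  have habs : ∀ a b : ℕ, |∑ i ∈ Finset.Ioc a b, f (S^[i] y)| ≤ ((Finset.Ioc a b).card : ℝ) * C := by
    intro a b
    calc |∑ i ∈ Finset.Ioc a b, f (S^[i] y)| ≤ ∑ i ∈ Finset.Ioc a b, |f (S^[i] y)| :=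
        Finset.abs_sum_le_sum_abs _ _
      _ ≤ ∑ _i ∈ Finset.Ioc a b, C := Finset.sum_le_sum fun i _ => hC _
      _ = ((Finset.Ioc a b).card : ℝ) * C := by rw [Finset.sum_const, nsmul_eq_mul]
  have hsplit1 := Finset.sum_Ioc_consecutive (fun i => f (S^[i] y)) (Nat.zero_le m)
    (Nat.le_add_right m n)
  have hsplit2 := Finset.sum_Ioc_consecutive (fun i => f (S^[i] y)) (Nat.zero_le n)
    (Nat.le_add_right n m)
  have hshift := aux_shift f S m n y
  have hb1 : |∑ i ∈ Finset.Ioc 0 m, f (S^[i] y)| ≤ (K : ℝ) * C := by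
    refine le_trans (habs 0 m) ?_
    have : ((Finset.Ioc 0 m).card : ℝ) = m := by rw [Nat.card_Ioc, Nat.sub_zero]
    rw [this]
    exact mul_le_mul_of_nonneg_right (by exact_mod_cast hmK) hC0
  have hb2 : |∑ i ∈ Finset.Ioc n (n + m), f (S^[i] y)| ≤ (K : ℝ) * C := by
    refine le_trans (habs n (n + m)) ?_
    have : ((Finset.Ioc n (n + m)).card : ℝ) = m := by
      rw [Nat.card_Ioc, Nat.add_sub_cancel_left]
    rw [this]
    exact mul_le_mul_of_nonneg_right (by exact_mod_cast hmK) hC0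
  have hKCn : 2 * (K : ℝ) * C ≤ n * (c / 2) := by
    have h1 : (N : ℝ) ≤ n := by exact_mod_cast hn
    have h2 : 2 * (K : ℝ) * C ≤ N * (c / 2) := by
      rw [div_le_iff₀ (by positivity : (0:ℝ) < c / 2)] at hN
      linarith
    have h3 : (N : ℝ) * (c / 2) ≤ n * (c / 2) := by
      apply mul_le_mul_of_nonneg_right h1 (by positivity)
    linarith
  have hmn : m + n = n + m := Nat.add_comm m n
  -- ∑_{Ioc 0 n} = ∑_{Ioc 0 m} + ∑_{Ioc m (m+n)} - ∑_{Ioc n (n+m)}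
  have hkey : ∑ i ∈ Finset.Ioc 0 n, f (S^[i] y) =
      (∑ i ∈ Finset.Ioc 0 m, f (S^[i] y)) + (∑ i ∈ Finset.Ioc m (m + n), f (S^[i] y))
        - ∑ i ∈ Finset.Ioc n (n + m), f (S^[i] y) := by
    have hsplit1' : (∑ i ∈ Finset.Ioc 0 m, f (S^[i] y)) +
        ∑ i ∈ Finset.Ioc m (m + n), f (S^[i] y) = ∑ i ∈ Finset.Ioc 0 (m + n), f (S^[i] y) :=
      hsplit1
    have hsplit2' : (∑ i ∈ Finset.Ioc 0 n, f (S^[i] y)) +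
        ∑ i ∈ Finset.Ioc n (n + m), f (S^[i] y) = ∑ i ∈ Finset.Ioc 0 (n + m), f (S^[i] y) :=
      hsplit2
    have heqs : ∑ i ∈ Finset.Ioc 0 (m + n), f (S^[i] y) =
        ∑ i ∈ Finset.Ioc 0 (n + m), f (S^[i] y) := by rw [hmn]
    linarith
  have hmid : ∑ i ∈ Finset.Ioc m (m + n), f (S^[i] y) ≤ n * (∫ z, f z ∂ν) + n * (c / 4) := by
    rw [← hshift]
    exact hsum_w
  have hb1' := abs_le.mp hb1
  have hb2' := abs_le.mp hb2
  rw [hkey]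
  have hc4 : (n : ℝ) * (c / 4) + 2 * K * C ≤ n * c := by
    have : (n:ℝ) * (c/4) + n * (c/2) ≤ n * c := by
      have hn0 : (0:ℝ) ≤ n := Nat.cast_nonneg n
      nlinarith
    linarith
  linarith [hb1'.2, hb2'.1, hmid]

/-- if the maximal equicontinuous factor map of a minimal system is
regular, then the system is Banach diam-mean equicontinuous. -/
theorem banachDiamMeanEquicontinuous_of_regular
    {X Y : Type} [MetricSpace X] [CompactSpace X] [MetricSpace Y] [CompactSpace Y]
    [MeasurableSpace Y] [BorelSpace Y]
    (T : X → X) (S : Y → Y) (hT : Continuous T) (hS : Continuous S)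
    (π : X → Y) (hmef : IsMEF T S π) (hmin : IsMinimalTDS T)
    (ν : Measure Y) [IsProbabilityMeasure ν] (hinv : Measure.map S ν = ν)
    (huniq : ∀ ν' : Measure Y, IsProbabilityMeasure ν' → Measure.map S ν' = ν' → ν' = ν)
    (hreg : ν {y : Y | ∃ x : X, π ⁻¹' {y} = {x}} = 1) :
    BanachDiamMeanEquicontinuous T := by
  intro x ε hε
  have hπc : Continuous π := hmef.1.1
  have hπs : Function.Surjective π := hmef.1.2.1
  have hsemi : Function.Semiconj π T S := fun a => congrFun hmef.1.2.2 a
  have hXb : ∀ s : Set X, Bornology.IsBounded s :=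
    fun s => isCompact_univ.isBounded.subset (subset_univ s)
  have hminY : IsMinimalTDS S := by
    intro y
    obtain ⟨x₀, rfl⟩ := hπs y
    have h1 : (Set.range fun n : ℕ => S^[n] (π x₀)) =
        π '' (Set.range fun n : ℕ => T^[n] x₀) := by
      rw [← Set.range_comp]
      refine congrArg Set.range ?_
      funext n
      exact ((hsemi.iterate_right n) x₀).symm
    rw [h1]
    rw [dense_iff_inter_open]
    intro U hU hUne
    obtain ⟨z, hz⟩ := hUne
    obtain ⟨x', rfl⟩ := hπs z
    obtain ⟨p, ⟨n, rfl⟩, hp⟩ := (hmin x₀).exists_mem_open (hU.preimage hπc) ⟨x', hz⟩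
    exact ⟨π (T^[n] x₀), hp, ⟨T^[n] x₀, ⟨n, rfl⟩, rfl⟩⟩
  set Δ := Metric.diam (univ : Set X) with hΔdef
  have hΔ0 : 0 ≤ Δ := Metric.diam_nonneg
  set ε₁ := ε / 4 with hε₁def
  have hε₁ : 0 < ε₁ := by rw [hε₁def]; positivity
  set c₀ := ε / (8 * (Δ + 1)) with hc₀def
  have hc₀ : 0 < c₀ := div_pos hε (by linarith)
  have hgΔ : ∀ (κ : ℝ) (y : Y), Metric.diam (π ⁻¹' Metric.closedBall y κ) ≤ Δ :=
    fun κ y => Metric.diam_mono (subset_univ _) (hXb _)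
  set A : ℕ → Set Y :=
    fun n => {y : Y | ε₁ ≤ Metric.diam (π ⁻¹' Metric.closedBall y (1 / (n + 1)))} with hAdef
  have hAclosed : ∀ n, IsClosed (A n) := by
    intro n
    have h1 := aux_open π hπc (1 / ((n:ℝ) + 1)) ε₁
    have h2 : A n = {y : Y | Metric.diam (π ⁻¹' Metric.closedBall y (1 / (n + 1))) < ε₁}ᶜ := by
      ext y; simp [hAdef, not_lt]
    rw [h2]
    exact h1.isClosed_compl
  have hAanti : Antitone A := by
    refine antitone_nat_of_succ_le fun n => ?_
    intro y hy
    simp only [hAdef, mem_setOf_eq] at hy ⊢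
    refine le_trans hy (Metric.diam_mono (preimage_mono (closedBall_subset_closedBall ?_)) (hXb _))
    push_cast
    exact one_div_le_one_div_of_le (by positivity) (by linarith)
  have hsingle : ∀ y : Y, (∃ x' : X, π ⁻¹' {y} = {x'}) → ∃ n : ℕ, y ∉ A n := by
    rintro y ⟨x', hx'⟩
    obtain ⟨n, hn⟩ := aux_nested (fun n : ℕ => π ⁻¹' Metric.closedBall y (1 / (n + 1)))
      (fun n => Metric.isClosed_closedBall.preimage hπc)
      (fun n => preimage_mono (closedBall_subset_closedBall (by
        push_cast
        exact one_div_le_one_div_of_le (by positivity) (by linarith))))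
      (Metric.isOpen_ball (x := x') (ε := ε₁ / 3))
      (by
        have h2 : (⋂ n : ℕ, Metric.closedBall y (1 / ((n:ℝ) + 1))) = {y} := by
          have h3 := aux_iInter y 0
          simpa using h3
        have h4 : (⋂ n : ℕ, π ⁻¹' Metric.closedBall y (1 / ((n:ℝ) + 1))) = π ⁻¹' {y} := by
          rw [← preimage_iInter, h2]
        rw [h4, hx']
        exact singleton_subset_iff.mpr (mem_ball_self (by positivity)))
    refine ⟨n, ?_⟩
    simp only [hAdef, mem_setOf_eq, not_le]
    calc Metric.diam (π ⁻¹' Metric.closedBall y (1 / (n + 1)))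
        ≤ Metric.diam (Metric.ball x' (ε₁ / 3)) := Metric.diam_mono hn (hXb _)
      _ ≤ 2 * (ε₁ / 3) := Metric.diam_ball (by positivity)
      _ < ε₁ := by linarith
  have hnull : ν (⋂ n, A n) = 0 := by
    have hmeas : MeasurableSet (⋂ n, A n) := (isClosed_iInter hAclosed).measurableSet
    have hsub : {y : Y | ∃ x' : X, π ⁻¹' {y} = {x'}} ⊆ (⋂ n, A n)ᶜ := by
      intro y hy
      obtain ⟨n, hn⟩ := hsingle y hy
      simp only [mem_compl_iff, mem_iInter, not_forall]
      exact ⟨n, hn⟩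
    have h1 := measure_mono (μ := ν) hsub
    rw [hreg, prob_compl_eq_one_sub hmeas] at h1
    by_contra hne
    have h3 := ENNReal.sub_lt_self (a := (1:ENNReal)) (b := ν (⋂ n, A n))
      ENNReal.one_ne_top one_ne_zero hne
    exact absurd h1 (not_le.mpr h3)
  have htend := MeasureTheory.tendsto_measure_iInter_atTop (μ := ν) (s := A)
    (fun n => (hAclosed n).measurableSet.nullMeasurableSet) hAanti ⟨0, measure_ne_top ν _⟩
  rw [hnull] at htend
  have hev : ∀ᶠ n : ℕ in atTop, ν (A n) < ENNReal.ofReal c₀ :=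
    htend.eventually_lt_const (ENNReal.ofReal_pos.mpr hc₀)
  obtain ⟨n₀, hn₀⟩ := hev.exists
  set κ := 1 / ((n₀:ℝ) + 1) with hκdef
  have hκ : 0 < κ := by rw [hκdef]; positivity
  obtain ⟨U, hWU, hUopen, hUlt⟩ := Set.exists_isOpen_lt_of_lt (A n₀) _ hn₀
  obtain ⟨φf, hφ0, hφ1, hφ01⟩ := exists_continuous_zero_one_of_isClosed
    hUopen.isClosed_compl (hAclosed n₀) (disjoint_compl_left.mono_right hWU)
  have hfint : Integrable (⇑φf) ν :=
    φf.continuous.integrable_of_hasCompactSupport (IsClosed.isCompact (isClosed_tsupport _))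
  have hIle : ∫ z, φf z ∂ν ≤ c₀ := by
    have hle : ∀ z, φf z ≤ U.indicator (fun _ => (1:ℝ)) z := by
      intro z
      by_cases hz : z ∈ U
      · rw [indicator_of_mem hz]
        exact (hφ01 z).2
      · have h0 : φf z = 0 := by simpa using hφ0 hz
        rw [indicator_of_notMem hz, h0]
    calc ∫ z, φf z ∂ν ≤ ∫ z, U.indicator (fun _ => (1:ℝ)) z ∂ν :=
        integral_mono hfint ((integrable_const 1).indicator hUopen.measurableSet) hle
      _ = (ν U).toReal := by rw [integral_indicator_const (1:ℝ) hUopen.measurableSet]; simp [Measure.real_def]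
      _ ≤ c₀ := by
          calc (ν U).toReal ≤ (ENNReal.ofReal c₀).toReal :=
              ENNReal.toReal_mono ENNReal.ofReal_ne_top hUlt.le
            _ = c₀ := ENNReal.toReal_ofReal hc₀.le
  have hgf : ∀ z : Y, Metric.diam (π ⁻¹' Metric.closedBall z κ) ≤ ε₁ + Δ * φf z := by
    intro z
    by_cases hz : z ∈ A n₀
    · have h1 : φf z = 1 := by simpa using hφ1 hz
      rw [h1, mul_one]
      linarith [hgΔ κ z]
    · have h2 : Metric.diam (π ⁻¹' Metric.closedBall z κ) < ε₁ := by
        simp only [hAdef, mem_setOf_eq, not_le] at hz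
        rw [hκdef]
        exact hz
      have h3 : 0 ≤ φf z := (hφ01 z).1
      have h4 : 0 ≤ Δ * φf z := mul_nonneg hΔ0 h3
      linarith
  obtain ⟨δ₂, hδ₂pos, hδ₂⟩ := hmef.2.1 κ hκ
  obtain ⟨δ, hδpos, hδprop⟩ := Metric.uniformContinuous_iff.mp
    (CompactSpace.uniformContinuous_of_continuous hπc) δ₂ hδ₂pos
  have hdiam : ∀ i : ℕ, Metric.diam (T^[i] '' Metric.ball x δ) ≤
      Metric.diam (π ⁻¹' Metric.closedBall (S^[i] (π x)) κ) := by
    intro i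
    refine Metric.diam_mono ?_ (hXb _)
    rintro _ ⟨a, ha, rfl⟩
    simp only [mem_preimage, mem_closedBall]
    have h1 : dist (π a) (π x) < δ₂ := hδprop (mem_ball.mp ha)
    have h2 : dist (S^[i] (π a)) (S^[i] (π x)) < κ := hδ₂ _ _ h1 i
    have h3 : π (T^[i] a) = S^[i] (π a) := (hsemi.iterate_right i) a
    rw [h3]
    exact h2.le
  have hunif := aux_unif S hS hmef.2.1 hminY ν hinv (⇑φf) φf.continuous hc₀
  have hkeynum : ε₁ + Δ * ((∫ z, φf z ∂ν) + c₀) ≤ ε / 2 := by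
    have h1 : (∫ z, φf z ∂ν) + c₀ ≤ 2 * c₀ := by linarith
    have h2 : Δ * ((∫ z, φf z ∂ν) + c₀) ≤ Δ * (2 * c₀) := mul_le_mul_of_nonneg_left h1 hΔ0
    have h3 : c₀ * (8 * (Δ + 1)) = ε := div_mul_cancel₀ _ (by nlinarith)
    nlinarith [hc₀.le, hΔ0]
  refine ⟨δ, hδpos, ?_⟩
  have hbound : ∀ᶠ n : ℕ in atTop, banachDiamAvg T (Metric.ball x δ) n ≤ ε / 2 := by
    filter_upwards [hunif, eventually_ge_atTop 1] with n hn hn1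
    have hnpos : (0:ℝ) < n := by exact_mod_cast hn1
    simp only [banachDiamAvg]
    refine Real.iSup_le (fun M => ?_) (by linarith)
    rw [div_le_iff₀ hnpos]
    have hIcc : Finset.Icc (M+1) (M+n) = Finset.Ioc M (M+n) := Finset.Icc_add_one_left_eq_Ioc M (M+n)
    have hshift := aux_shift (fun z => Metric.diam (π ⁻¹' Metric.closedBall z κ)) S M n (π x)
    calc ∑ i ∈ Finset.Icc (M+1) (M+n), Metric.diam (T^[i] '' Metric.ball x δ)
        ≤ ∑ i ∈ Finset.Icc (M+1) (M+n),
            Metric.diam (π ⁻¹' Metric.closedBall (S^[i] (π x)) κ) :=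
          Finset.sum_le_sum fun i _ => hdiam i
      _ = ∑ i ∈ Finset.Ioc 0 n,
            Metric.diam (π ⁻¹' Metric.closedBall (S^[i] (S^[M] (π x))) κ) := by
          rw [hIcc, ← hshift]
      _ ≤ ∑ i ∈ Finset.Ioc 0 n, (ε₁ + Δ * φf (S^[i] (S^[M] (π x)))) :=
          Finset.sum_le_sum fun i _ => hgf _
      _ = n * ε₁ + Δ * ∑ i ∈ Finset.Ioc 0 n, φf (S^[i] (S^[M] (π x))) := by
          rw [Finset.sum_add_distrib, Finset.sum_const, Nat.card_Ioc, Nat.sub_zero, nsmul_eq_mul,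
            ← Finset.mul_sum]
      _ ≤ n * ε₁ + Δ * (n * ((∫ z, φf z ∂ν) + c₀)) := by
          have h5 := mul_le_mul_of_nonneg_left (hn (S^[M] (π x))) hΔ0
          linarith
      _ ≤ ε / 2 * n := by
          have h6 := mul_le_mul_of_nonneg_left hkeynum hnpos.le
          nlinarith
  have hcob : Filter.IsCoboundedUnder (· ≤ ·) atTop (banachDiamAvg T (Metric.ball x δ)) := by
    apply Filter.IsBoundedUnder.isCoboundedUnder_le
    refine Filter.isBoundedUnder_of ⟨0, fun n => ?_⟩
    simp only [banachDiamAvg, ge_iff_le]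
    exact Real.iSup_nonneg fun M =>
      div_nonneg (Finset.sum_nonneg fun i _ => Metric.diam_nonneg) (Nat.cast_nonneg n)
  have hfinal : Filter.atTop.limsup (banachDiamAvg T (Metric.ball x δ)) ≤ ε / 2 :=
    Filter.limsup_le_of_le hcob hbound
  linarith
end
end

section
/- Let (X,T) be a minimal topological dynamical system. Then (X,T) is either diam-mean equicontinuous or diam-mean sensitive: there exists ε>0 such that for every nonempty open set U, the upper density of {i∈ℤ₊ : diam(Tⁱ U) > ε} exceeds ε. -/
open Filter Metric Set MeasureTheory

noncomputable section

variable {X Y : Type} [MetricSpace X] [MetricSpace Y]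

/-- a minimal system is either diam-mean equicontinuous or
diam-mean sensitive. -/
theorem diamMeanEquicontinuous_or_diamMeanSensitive
    {X : Type} [MetricSpace X] [CompactSpace X]
    (T : X → X) (hT : Continuous T) (hmin : IsMinimalTDS T) :
    DiamMeanEquicontinuous T ∨
      ∃ ε > 0, ∀ U : Set X, IsOpen U → U.Nonempty →
        ε < upperDensity {i : ℕ | ε < Metric.diam (T^[i] '' U)} := by
    classical
  by_cases heq : DiamMeanEquicontinuous T
  · exact Or.inl heq
  right
  simp only [DiamMeanEquicontinuous, DiamMeanEqPt] at heq
  push_neg at heq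
  obtain ⟨x, ε₀, hε₀, hδ⟩ := heq
  set D : ℝ := Metric.diam (Set.univ : Set X) with hDdef
  have hDle : ∀ s : Set X, Metric.diam s ≤ D :=
    fun s => Metric.diam_mono (Set.subset_univ s) isCompact_univ.isBounded
  have hD0 : 0 ≤ D := Metric.diam_nonneg
  have hDpos : 0 < D := by
    rcases lt_or_eq_of_le hD0 with h | h
    · exact h
    exfalso
    have hz : ∀ B : Set X, diamAvg T B = fun _ => (0 : ℝ) := by
      intro B
      funext n
      have : ∀ i ∈ Finset.Icc 1 n, Metric.diam (T^[i] '' B) = 0 := by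
        intro i _
        exact le_antisymm (le_trans (hDle _) h.ge) Metric.diam_nonneg
      simp [diamAvg, Finset.sum_congr rfl this]
    have h1 := hδ 1 one_pos
    rw [hz (Metric.ball x 1), Filter.limsup_const (0 : ℝ)] at h1
    linarith
  set ε : ℝ := ε₀ / (4 * (D + 1)) with hεdef
  have hεpos : 0 < ε := by positivity
  have hεD : ε * (D + 1) = ε₀ / 4 := by
    rw [hεdef]; field_simp
  refine ⟨ε, hεpos, ?_⟩
  intro U hU hUne
  -- find k with T^[k] x ∈ U
  obtain ⟨y, hyr, hyU⟩ := (hmin x).exists_mem_open hU hUne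
  obtain ⟨k, rfl⟩ := hyr
  -- continuity of T^[k] gives δ
  have hcont : Continuous (T^[k]) := hT.iterate k
  have hnh : T^[k] ⁻¹' U ∈ nhds x := hcont.continuousAt.preimage_mem_nhds (hU.mem_nhds hyU)
  obtain ⟨δ, δpos, hball⟩ := Metric.mem_nhds_iff.mp hnh
  set B : Set X := Metric.ball x δ with hBdef
  have hBU : T^[k] '' B ⊆ U := Set.image_subset_iff.mpr hball
  have hsub : ∀ i : ℕ, k ≤ i → T^[i] '' B ⊆ T^[i - k] '' U := by
    intro i hki
    have h1 : T^[i] '' B = T^[i - k] '' (T^[k] '' B) := by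
      rw [← Set.image_comp, ← Function.iterate_add, Nat.sub_add_cancel hki]
    rw [h1]
    exact Set.image_mono hBU
  set F : Set ℕ := {j : ℕ | ε < Metric.diam (T^[j] '' U)} with hFdef
  set c : ℕ → ℝ := fun n => ((F ∩ Set.Ico 0 n).ncard : ℝ) with hcdef
  have hFfin : ∀ n : ℕ, (F ∩ Set.Ico 0 n).Finite :=
    fun n => (Set.finite_Ico 0 n).subset Set.inter_subset_right
  have hcmono : ∀ n : ℕ, ((F ∩ Set.Ico 0 (n + 1)).ncard : ℝ) ≤ c n + 1 := by
    intro n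
    have hsub2 : F ∩ Set.Ico 0 (n + 1) ⊆ (F ∩ Set.Ico 0 n) ∪ {n} := by
      rintro j ⟨hj1, hj2⟩
      rcases lt_or_eq_of_le (Nat.lt_succ_iff.mp hj2.2) with h | h
      · exact Or.inl ⟨hj1, ⟨Nat.zero_le _, h⟩⟩
      · exact Or.inr (by simp [h])
    calc ((F ∩ Set.Ico 0 (n + 1)).ncard : ℝ)
        ≤ (((F ∩ Set.Ico 0 n) ∪ {n}).ncard : ℝ) := by
          exact_mod_cast Nat.cast_le.mpr
            (Set.ncard_le_ncard hsub2 ((hFfin n).union (Set.finite_singleton n)))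
      _ ≤ c n + 1 := by
          have h5 := Set.ncard_union_le (F ∩ Set.Ico 0 n) {n}
          simp only [Set.ncard_singleton] at h5
          show (((F ∩ Set.Ico 0 n) ∪ {n}).ncard : ℝ) ≤ ((F ∩ Set.Ico 0 n).ncard : ℝ) + 1
          exact_mod_cast h5
  -- key inequality
  have hkey : ∀ n : ℕ, 1 ≤ n →
      diamAvg T B n ≤ ε + D * (k + 1) / n + D * c n / n := by
    intro n hn
    have hnpos : (0 : ℝ) < n := by exact_mod_cast hn
    set s1 : Finset ℕ :=
      (Finset.Icc 1 n).filter (fun i => ε < Metric.diam (T^[i] '' B)) with hs1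
    have hsum : ∑ i ∈ Finset.Icc 1 n, Metric.diam (T^[i] '' B)
        ≤ D * s1.card + ε * n := by
      rw [← Finset.sum_filter_add_sum_filter_not (Finset.Icc 1 n)
        (fun i => ε < Metric.diam (T^[i] '' B))]
      refine add_le_add ?_ ?_
      · calc ∑ i ∈ s1, Metric.diam (T^[i] '' B) ≤ ∑ _i ∈ s1, D :=
              Finset.sum_le_sum (fun i _ => hDle _)
          _ = D * s1.card := by rw [Finset.sum_const, nsmul_eq_mul, mul_comm]
      · calc ∑ i ∈ (Finset.Icc 1 n).filter (fun i => ¬ ε < Metric.diam (T^[i] '' B)),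
              Metric.diam (T^[i] '' B)
            ≤ ∑ _i ∈ (Finset.Icc 1 n).filter (fun i => ¬ ε < Metric.diam (T^[i] '' B)), ε :=
              Finset.sum_le_sum (fun i hi => not_lt.mp (Finset.mem_filter.mp hi).2)
          _ ≤ ε * n := by
              rw [Finset.sum_const, nsmul_eq_mul, mul_comm]
              have hcl : (((Finset.Icc 1 n).filter
                  (fun i => ¬ ε < Metric.diam (T^[i] '' B))).card : ℝ) ≤ (n : ℝ) := by
                have : ((Finset.Icc 1 n).filter
                    (fun i => ¬ ε < Metric.diam (T^[i] '' B))).card ≤ n :=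
                  le_trans (Finset.card_le_card (Finset.filter_subset _ _))
                    (by simp [Nat.card_Icc])
                exact_mod_cast this
              exact mul_le_mul_of_nonneg_left hcl hεpos.le
    have hcard : (s1.card : ℝ) ≤ k + 1 + c n := by
      set s2 : Finset ℕ := s1.filter (fun i => k + 1 ≤ i) with hs2
      have h12 : s1.card ≤ k + s2.card := by
        have hsub1 : s1 ⊆ Finset.Icc 1 k ∪ s2 := by
          intro i hi
          by_cases h : k + 1 ≤ i
          · exact Finset.mem_union_right _ (Finset.mem_filter.mpr ⟨hi, h⟩)
          · refine Finset.mem_union_left _ (Finset.mem_Icc.mpr ?_)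
            have := Finset.mem_Icc.mp (Finset.mem_filter.mp hi).1
            omega
        calc s1.card ≤ (Finset.Icc 1 k ∪ s2).card := Finset.card_le_card hsub1
          _ ≤ (Finset.Icc 1 k).card + s2.card := Finset.card_union_le _ _
          _ = k + s2.card := by simp [Nat.card_Icc]
      set G : Finset ℕ := s2.image (fun i => i - k) with hG
      have hGcard : s2.card = G.card := by
        rw [hG]
        refine (Finset.card_image_of_injOn ?_).symm
        intro a ha b hb hab
        have ha' := (Finset.mem_filter.mp ha).2
        have hb' := (Finset.mem_filter.mp hb).2
        have hab' : a - k = b - k := hab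
        omega
      have hGsub : (G : Set ℕ) ⊆ F ∩ Set.Ico 0 (n + 1) := by
        intro j hj
        simp only [hG, Finset.coe_image, Set.mem_image, Finset.mem_coe] at hj
        obtain ⟨i, hi, rfl⟩ := hj
        obtain ⟨hi1, hik⟩ := Finset.mem_filter.mp hi
        obtain ⟨hiIcc, hidiam⟩ := Finset.mem_filter.mp hi1
        have hin := Finset.mem_Icc.mp hiIcc
        constructor
        · have : Metric.diam (T^[i] '' B) ≤ Metric.diam (T^[i - k] '' U) :=
            Metric.diam_mono (hsub i (by omega)) (isCompact_univ.isBounded.subset (Set.subset_univ _))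
          exact lt_of_lt_of_le hidiam this
        · exact ⟨Nat.zero_le _, by omega⟩
      have hG2 : (G.card : ℝ) ≤ c n + 1 := by
        calc (G.card : ℝ) = ((G : Set ℕ).ncard : ℝ) := by rw [Set.ncard_coe_finset]
          _ ≤ ((F ∩ Set.Ico 0 (n + 1)).ncard : ℝ) := by
              exact_mod_cast Nat.cast_le.mpr (Set.ncard_le_ncard hGsub (hFfin (n + 1)))
          _ ≤ c n + 1 := hcmono n
      calc (s1.card : ℝ) ≤ k + s2.card := by exact_mod_cast h12
        _ = k + G.card := by rw [hGcard]
        _ ≤ k + (c n + 1) := by linarith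
        _ = k + 1 + c n := by ring
    rw [diamAvg, div_le_iff₀ hnpos]
    calc ∑ i ∈ Finset.Icc 1 n, Metric.diam (T^[i] '' B)
        ≤ D * s1.card + ε * n := hsum
      _ ≤ D * (k + 1 + c n) + ε * n := by nlinarith
      _ = (ε + D * (k + 1) / n + D * c n / n) * n := by field_simp; ring
  -- frequently large average
  have hunn : ∀ n, 0 ≤ diamAvg T B n := by
    intro n
    apply div_nonneg _ (Nat.cast_nonneg n)
    exact Finset.sum_nonneg (fun i _ => Metric.diam_nonneg)
  have hcob : Filter.atTop.IsCoboundedUnder (· ≤ ·) (diamAvg T B) :=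
    Filter.IsBoundedUnder.isCoboundedUnder_le
      (Filter.isBoundedUnder_of ⟨0, fun n => hunn n⟩)
  have hfreq : ∃ᶠ n in Filter.atTop, ε₀ - ε₀ / 4 < diamAvg T B n :=
    Filter.frequently_lt_of_lt_limsup hcob (lt_of_lt_of_le (by linarith) (hδ δ δpos))
  have hev : ∀ᶠ n : ℕ in Filter.atTop, D * (k + 1) / n ≤ ε₀ / 4 ∧ 1 ≤ n := by
    have h1 : ∀ᶠ n : ℕ in Filter.atTop, D * (k + 1) / n < ε₀ / 4 :=
      (tendsto_const_div_atTop_nhds_zero_nat (D * (k + 1))).eventually_lt_const (by positivity)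
    filter_upwards [h1, Filter.eventually_ge_atTop 1] with n hn1 hn2
    exact ⟨hn1.le, hn2⟩
  set ε' : ℝ := (ε₀ / 2 - ε) / D with hε'def
  have hfreq2 : ∃ᶠ n in Filter.atTop, ε' ≤ c n / n := by
    refine (hfreq.and_eventually hev).mono ?_
    rintro n ⟨h1, h2, h3⟩
    have hk := hkey n h3
    have hnpos : (0 : ℝ) < n := by exact_mod_cast h3
    rw [hε'def, div_le_iff₀ hDpos]
    have h4 : c n / n * D = D * c n / n := by ring
    linarith
  have hbd : ∀ n : ℕ, c n / n ≤ 1 := by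
    intro n
    rcases Nat.eq_zero_or_pos n with rfl | hn
    · simp
    have hnpos : (0 : ℝ) < n := by exact_mod_cast hn
    rw [div_le_one hnpos]
    have h6 : (F ∩ Set.Ico 0 n).ncard ≤ n := by
      calc (F ∩ Set.Ico 0 n).ncard ≤ (Set.Ico 0 n).ncard :=
            Set.ncard_le_ncard Set.inter_subset_right (Set.finite_Ico 0 n)
        _ = n := by rw [← Finset.coe_Ico, Set.ncard_coe_finset]; simp
    show ((F ∩ Set.Ico 0 n).ncard : ℝ) ≤ (n : ℝ)
    exact_mod_cast h6
  have hupper : ε' ≤ upperDensity F :=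
    Filter.le_limsup_of_frequently_le hfreq2
      (Filter.isBoundedUnder_of ⟨1, fun n => hbd n⟩)
  have hεε' : ε < ε' := by
    rw [hε'def, lt_div_iff₀ hDpos]
    nlinarith
  exact lt_of_lt_of_le hεε' hupper
end
end
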